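/- arXiv:1702.04718 — 9 statements merged into one kernel-verified Lean document; each statement's English description precedes it below -/
import Mathlib

section
/- Let P be an orthogonal projection on H and B a bounded linear operator on H such that B∘P = B and P∘B = 0. If φ, ψ ∈ H satisfy ψ + B*(Bψ) = B*φ, then: (i) Pψ = ψ; (ii) ‖ψ‖ ≤ (1/2)‖φ − Pφ‖; and (iii) ‖Bψ‖ ≤ ‖φ − Pφ‖. (In particular, the operator A = (1 + B*B)⁻¹ B* satisfies A = P A (1 − P), ‖Aφ‖ ≤ (1/2)‖(1 − P)φ‖ and ‖B A φ‖ ≤ ‖(1 − P)φ‖ for every φ ∈ H.) -/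
open scoped RealInnerProductSpace

/-- Key properties of the auxiliary operator `A = (1 + B*B)⁻¹ B*` with `B = L_ham Π_p`:
if `P` is an orthogonal projection, `B∘P = B`, `P∘B = 0`, and `ψ + B*(Bψ) = B*φ`, then
`Pψ = ψ`, `‖ψ‖ ≤ (1/2)‖φ - Pφ‖` and `‖Bψ‖ ≤ ‖φ - Pφ‖`. -/
theorem auxiliary_operator_bounds
    {H : Type*} [NormedAddCommGroup H] [InnerProductSpace ℝ H] [CompleteSpace H]
    (P B : H →L[ℝ] H)
    (hPidem : P ∘L P = P) (hPsa : ∀ x y : H, ⟪P x, y⟫ = ⟪x, P y⟫)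
    (hBP : B ∘L P = B) (hPB : P ∘L B = 0)
    (φ ψ : H) (hψ : ψ + ContinuousLinearMap.adjoint B (B ψ) = ContinuousLinearMap.adjoint B φ) :
    P ψ = ψ ∧ ‖ψ‖ ≤ (1/2) * ‖φ - P φ‖ ∧ ‖B ψ‖ ≤ ‖φ - P φ‖ := by
  have hPadj : ContinuousLinearMap.adjoint P = P := by
    symm; rw [ContinuousLinearMap.eq_adjoint_iff]; exact hPsa
  have hPBadj : ∀ x, P (ContinuousLinearMap.adjoint B x) = ContinuousLinearMap.adjoint B x := by
    intro x
    have h := congrArg ContinuousLinearMap.adjoint hBP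
    rw [ContinuousLinearMap.adjoint_comp, hPadj] at h
    exact congrFun (congrArg DFunLike.coe h) x
  have hψeq : ψ = ContinuousLinearMap.adjoint B φ - ContinuousLinearMap.adjoint B (B ψ) := by
    rw [eq_sub_iff_add_eq]; exact hψ
  have hPψ : P ψ = ψ := by
    rw [hψeq, map_sub, hPBadj, hPBadj]
  have hPBψ : P (B ψ) = 0 := by
    have := congrFun (congrArg DFunLike.coe hPB) ψ
    simpa using this
  have key : ‖ψ‖ ^ 2 + ‖B ψ‖ ^ 2 = ⟪φ - P φ, B ψ⟫ := by
    have h1 := congrArg (fun v => ⟪v, ψ⟫) hψ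
    simp only [inner_add_left] at h1
    rw [ContinuousLinearMap.adjoint_inner_left, ContinuousLinearMap.adjoint_inner_left] at h1
    rw [inner_sub_left, hPsa, hPBψ, inner_zero_right, sub_zero]
    rw [← h1, real_inner_self_eq_norm_sq, real_inner_self_eq_norm_sq]
  have hle : ⟪φ - P φ, B ψ⟫ ≤ ‖φ - P φ‖ * ‖B ψ‖ := real_inner_le_norm _ _
  have hkey2 : ‖ψ‖ ^ 2 + ‖B ψ‖ ^ 2 ≤ ‖φ - P φ‖ * ‖B ψ‖ := key ▸ hle
  have h0 : (0:ℝ) ≤ ‖B ψ‖ := norm_nonneg _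
  have h0' : (0:ℝ) ≤ ‖ψ‖ := norm_nonneg _
  have h0'' : (0:ℝ) ≤ ‖φ - P φ‖ := norm_nonneg _
  refine ⟨hPψ, ?_, ?_⟩
  · nlinarith [sq_nonneg (‖φ - P φ‖ - 2 * ‖B ψ‖)]
  · nlinarith [sq_nonneg ‖ψ‖]
end

section
/- (Quantitative core of the hypocoercivity estimate, Proposition 2.4.) For all m > 0, λ_h > 0 and R ≥ 0 there exist ε̄ ∈ (0, 1) and λ̄ > 0 such that for every γ > 0, setting ε = ε̄·min(γ, γ⁻¹), one has for all x, y ∈ ℝ: ε λ_h x² + (γ/m − ε) y² − ε (R + γ/(2m)) |x|·|y| ≥ λ̄ min(γ, γ⁻¹) (x² + y²). -/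
private lemma amgm_aux (A c C a b : ℝ) (hA : 0 ≤ A) (hc : 0 ≤ c) (hC : 0 ≤ C)
    (h2 : C^2 ≤ A*c) (ha : 0 ≤ a) (hb : 0 ≤ b) :
    C*a*b ≤ A/2*a^2 + c/2*b^2 := by
  have hCs : C ≤ Real.sqrt (A*c) := by
    rw [show C = Real.sqrt (C^2) from (Real.sqrt_sq hC).symm]
    exact Real.sqrt_le_sqrt h2
  have sA : Real.sqrt A ^ 2 = A := Real.sq_sqrt hA
  have sc : Real.sqrt c ^ 2 = c := Real.sq_sqrt hc
  have sAc : Real.sqrt A * Real.sqrt c = Real.sqrt (A*c) := (Real.sqrt_mul hA c).symm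
  have q := sq_nonneg (Real.sqrt A * a - Real.sqrt c * b)
  have eA : Real.sqrt A ^ 2 * a^2 = A * a^2 := by rw [sA]
  have ec : Real.sqrt c ^ 2 * b^2 = c * b^2 := by rw [sc]
  have eAc : Real.sqrt A * Real.sqrt c * (a*b) = Real.sqrt (A*c) * (a*b) := by rw [sAc]
  have w : C*(a*b) ≤ Real.sqrt (A*c) * (a*b) :=
    mul_le_mul_of_nonneg_right hCs (mul_nonneg ha hb)
  linarith [q, eA, ec, eAc, w]

set_option maxHeartbeats 3000000 in
/-- Quantitative core of the hypocoercivity estimate (Proposition 2.4): the entropy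
dissipation quadratic form dominates a multiple `λ̄ min(γ, γ⁻¹)` of the squared norm,
for the choice `ε = ε̄ min(γ, γ⁻¹)`. -/
theorem hypocoercivity_quadratic_core (m lamh R : ℝ) (hm : 0 < m) (hlamh : 0 < lamh)
    (hR : 0 ≤ R) :
    ∃ ε' ∈ Set.Ioo (0 : ℝ) 1, ∃ lam > (0 : ℝ), ∀ γ > (0 : ℝ), ∀ x y : ℝ,
      lam * min γ γ⁻¹ * (x^2 + y^2) ≤
        (ε' * min γ γ⁻¹) * lamh * x^2 + (γ/m - ε' * min γ γ⁻¹) * y^2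
          - (ε' * min γ γ⁻¹) * (R + γ/(2*m)) * |x| * |y| := by
  set E : ℝ := min (1/2) (min (1/(2*m)) (lamh*m/(4*m^2*R^2+1))) with hEdef
  have hE0 : 0 < E := by
    apply lt_min (by norm_num)
    exact lt_min (by positivity) (by positivity)
  have hEhalf : E ≤ 1/2 := min_le_left _ _
  have hE1 : E ≤ 1/(2*m) := le_trans (min_le_right _ _) (min_le_left _ _)
  have hE2 : E ≤ lamh*m/(4*m^2*R^2+1) := le_trans (min_le_right _ _) (min_le_right _ _)
  have u0 : E*(2*m) ≤ 1 := by
    rw [show (1:ℝ)/(2*m) = 1/(2*m) from rfl, le_div_iff₀ (by positivity)] at hE1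
    linarith
  have u1 : E*(4*m^2*R^2+1) ≤ lamh*m := by
    rw [le_div_iff₀ (by positivity)] at hE2
    exact hE2
  clear_value E
  refine ⟨E, ⟨hE0, by linarith⟩, min (E*lamh/2) (1/(4*m)),
    lt_min (by positivity) (by positivity), ?_⟩
  set lam : ℝ := min (E*lamh/2) (1/(4*m)) with hlamdef
  have hl1 : lam ≤ E*lamh/2 := min_le_left _ _
  have hl2 : lam ≤ 1/(4*m) := min_le_right _ _
  have hl2' : lam*(4*m) ≤ 1 := by
    rw [le_div_iff₀ (by positivity)] at hl2
    linarith
  have hl0 : 0 < lam := lt_min (by positivity) (by positivity)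
  clear_value lam
  intro γ hγ x y
  set μ : ℝ := min γ γ⁻¹ with hμdef
  have hμ0 : 0 < μ := lt_min hγ (by positivity)
  have hμγ : μ ≤ γ := min_le_left _ _
  have hμγ2 : μ * γ ≤ 1 := by
    have h := min_le_right γ γ⁻¹
    calc μ * γ ≤ γ⁻¹ * γ := mul_le_mul_of_nonneg_right h hγ.le
    _ = 1 := inv_mul_cancel₀ (ne_of_gt hγ)
  clear_value μ
  set c : ℝ := γ/(2*m) with hcdef
  have hc0 : 0 < c := by positivity
  have eγ : γ = 2*m*c := by rw [hcdef]; field_simp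
  have hμ2mc : μ ≤ 2*m*c := eγ ▸ hμγ
  have hμc : μ*c*(2*m) ≤ 1 := by
    rw [eγ] at hμγ2; linarith [hμγ2, show μ*(2*m*c) = μ*c*(2*m) from by ring]
  have eγm : γ/m = 2*c := by rw [hcdef]; field_simp
  clear_value c
  rw [eγm]
  set a := |x| with hadef
  set b := |y| with hbdef
  have ha0 : 0 ≤ a := abs_nonneg x
  have hb0 : 0 ≤ b := abs_nonneg y
  have hax : a^2 = x^2 := sq_abs x
  have hby : b^2 = y^2 := sq_abs y
  clear_value a b
  rw [← hax, ← hby]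
  -- E·μ ≤ c
  have hEμc : E*μ ≤ c := by
    have w1 : E*μ ≤ E*(2*m*c) := mul_le_mul_of_nonneg_left hμ2mc hE0.le
    have w2 : E*(2*m)*c ≤ 1*c := mul_le_mul_of_nonneg_right u0 hc0.le
    linarith [w1, w2]
  have hB : c ≤ 2*c - E*μ := by linarith
  -- key square-coefficient bound
  have key : E*(μ*(R+c)^2) ≤ lamh*c := by
    have s1 : (R+c)^2 ≤ 2*R^2 + 2*c^2 := by nlinarith [sq_nonneg (R-c)]
    have k1 : m*E*μ*(R+c)^2 ≤ m*E*μ*(2*R^2 + 2*c^2) :=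
      mul_le_mul_of_nonneg_left s1 (by positivity)
    have k2 : m*E*μ*(2*R^2) ≤ E*(4*m^2*R^2)*c := by
      linarith [mul_le_mul_of_nonneg_left hμ2mc (by positivity : (0:ℝ) ≤ m*E*(2*R^2))]
    have k3 : m*E*μ*(2*c^2) ≤ E*c := by
      linarith [mul_le_mul_of_nonneg_right hμc (by positivity : (0:ℝ) ≤ E*c)]
    have k4 : E*(4*m^2*R^2+1)*c ≤ lamh*m*c := mul_le_mul_of_nonneg_right u1 hc0.le
    have keym : m*(E*(μ*(R+c)^2)) ≤ m*(lamh*c) := by linarith [k1, k2, k3, k4]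
    exact le_of_mul_le_mul_left keym hm
  have hC2 : (E*μ*(R+c))^2 ≤ (E*μ*lamh)*c := by
    have w := mul_le_mul_of_nonneg_left key (mul_nonneg hE0.le hμ0.le)
    linarith [w]
  -- cross-term bound via AM-GM (through square roots)
  have hcross : (E*μ*(R+c))*a*b ≤ (E*μ*lamh)/2*a^2 + c/2*b^2 :=
    amgm_aux (E*μ*lamh) c (E*μ*(R+c)) a b (by positivity) hc0.le (by positivity) hC2 ha0 hb0
  -- conclude
  have h1 : lam*μ*a^2 ≤ (E*μ*lamh/2)*a^2 := by
    linarith [mul_le_mul_of_nonneg_right hl1 (mul_nonneg hμ0.le (sq_nonneg a))]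
  have h2 : lam*μ*b^2 ≤ (c/2)*b^2 := by
    have v1 : lam*μ ≤ lam*(2*m*c) := mul_le_mul_of_nonneg_left hμ2mc hl0.le
    have v2 : lam*(4*m)*c ≤ 1*c := mul_le_mul_of_nonneg_right hl2' hc0.le
    have v3 : lam*μ ≤ c/2 := by linarith [v1, v2]
    linarith [mul_le_mul_of_nonneg_right v3 (sq_nonneg b)]
  have h3 : c*b^2 ≤ (2*c - E*μ)*b^2 := mul_le_mul_of_nonneg_right hB (sq_nonneg b)
  linarith [hcross, h1, h2, h3]
end

section
/- (Exponential decay of the semigroup implies invertibility with resolvent bound.) Let E be a Banach space and T a bounded linear operator on E. Assume there exist C > 0 and λ > 0 such that ‖exp(tT)‖ ≤ C e^{−λt} for all t ≥ 0, where exp denotes the operator exponential. Then T is invertible in the algebra of bounded operators on E, its inverse is given by the Bochner integral T⁻¹ = −∫₀^∞ exp(tT) dt, and ‖T⁻¹‖ ≤ C/λ. -/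
open MeasureTheory

section aux

variable {E : Type*} [NormedAddCommGroup E] [NormedSpace ℝ E] [CompleteSpace E]

private lemma aux_exp_integral (lam : ℝ) (hlam : 0 < lam) :
    ∫ t in Set.Ioi (0:ℝ), Real.exp (-lam * t) = 1 / lam := by
  have key : ∫ t in Set.Ioi (0:ℝ), Real.exp (-lam * t)
      = 0 - (-(1/lam) * Real.exp (-lam * 0)) := by
    apply integral_Ioi_of_hasDerivAt_of_tendsto
        (f := fun t => -(1/lam) * Real.exp (-lam * t))
    · exact (Continuous.continuousWithinAt (by continuity))
    · intro x _
      have h1 : HasDerivAt (fun t : ℝ => -lam * t) (-lam) x := by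
        simpa using (hasDerivAt_id x).const_mul (-lam)
      have h2 := (Real.hasDerivAt_exp (-lam * x)).comp x h1
      have h3 := h2.const_mul (-(1/lam))
      convert h3 using 1
      · rfl
      · rfl
      · field_simp
    · exact (exp_neg_integrableOn_Ioi 0 hlam)
    · have h : Filter.Tendsto (fun t : ℝ => Real.exp (-lam * t)) Filter.atTop (nhds 0) := by
        have : Filter.Tendsto (fun t : ℝ => -lam * t) Filter.atTop Filter.atBot := by
          simpa using (Filter.tendsto_id (α := ℝ)).const_mul_atTop_of_neg (neg_neg_iff_pos.mpr hlam)
        exact Real.tendsto_exp_atBot.comp this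
      simpa using h.const_mul (-(1/lam))
  rw [key]
  simp

end aux

set_option maxHeartbeats 1000000 in
set_option synthInstance.maxHeartbeats 400000 in
/-- Exponential decay of the semigroup implies invertibility with resolvent bound:
if `‖exp(tT)‖ ≤ C e^{-λt}` for all `t ≥ 0`, then `T` is invertible with inverse
`-∫₀^∞ exp(tT) dt`, and `‖T⁻¹‖ ≤ C/λ`. -/
theorem semigroup_decay_invertible
    {E : Type*} [NormedAddCommGroup E] [NormedSpace ℝ E] [CompleteSpace E]
    (T : E →L[ℝ] E) (C lam : ℝ) (hC : 0 < C) (hlam : 0 < lam)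
    (hdecay : ∀ t : ℝ, 0 ≤ t → ‖NormedSpace.exp (t • T)‖ ≤ C * Real.exp (-lam * t)) :
    T ∘L (-∫ t in Set.Ioi (0:ℝ), NormedSpace.exp (t • T)) = 1 ∧
    (-∫ t in Set.Ioi (0:ℝ), NormedSpace.exp (t • T)) ∘L T = 1 ∧
    ‖-∫ t in Set.Ioi (0:ℝ), NormedSpace.exp (t • T)‖ ≤ C / lam := by
  set f : ℝ → (E →L[ℝ] E) := fun t => NormedSpace.exp (t • T) with hf
  have hcont : Continuous f := by
    exact continuous_iff_continuousAt.2 fun x => (hasDerivAt_exp_smul_const T x).continuousAt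
  have hg_int : IntegrableOn (fun t => C * Real.exp (-lam * t)) (Set.Ioi (0:ℝ)) :=
    (exp_neg_integrableOn_Ioi 0 hlam).const_mul C
  have hbound : ∀ᵐ t ∂(volume.restrict (Set.Ioi (0:ℝ))),
      ‖f t‖ ≤ C * Real.exp (-lam * t) := by
    filter_upwards [ae_restrict_mem measurableSet_Ioi] with t ht
    exact hdecay t (le_of_lt ht)
  have hint : IntegrableOn f (Set.Ioi (0:ℝ)) :=
    Integrable.mono' hg_int hcont.stronglyMeasurable.aestronglyMeasurable.restrict hbound
  have htend : Filter.Tendsto f Filter.atTop (nhds 0) := by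
    apply squeeze_zero_norm' (a := fun t => C * Real.exp (-lam * t))
    · filter_upwards [Filter.eventually_ge_atTop (0:ℝ)] with t ht
      exact hdecay t ht
    · have h1 : Filter.Tendsto (fun t : ℝ => Real.exp (-lam * t)) Filter.atTop (nhds 0) := by
        have : Filter.Tendsto (fun t : ℝ => -lam * t) Filter.atTop Filter.atBot := by
          simpa using (Filter.tendsto_id (α := ℝ)).const_mul_atTop_of_neg
            (neg_neg_iff_pos.mpr hlam)
        exact Real.tendsto_exp_atBot.comp this
      simpa using h1.const_mul C
  have hf0 : f 0 = 1 := by simp [hf, NormedSpace.exp_zero]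
  -- FTC on the right-derivative version
  have hL : ∫ t in Set.Ioi (0:ℝ), T * f t = (0:E →L[ℝ] E) - f 0 := by
    apply integral_Ioi_of_hasDerivAt_of_tendsto
        (hcont.continuousWithinAt)
        (fun x _ => hasDerivAt_exp_smul_const' T x)
        ?_ htend
    exact (ContinuousLinearMap.mul ℝ (E →L[ℝ] E) T).integrable_comp hint
  have hR : ∫ t in Set.Ioi (0:ℝ), f t * T = (0:E →L[ℝ] E) - f 0 := by
    apply integral_Ioi_of_hasDerivAt_of_tendsto
        (hcont.continuousWithinAt)
        (fun x _ => hasDerivAt_exp_smul_const T x)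
        ?_ htend
    exact ((ContinuousLinearMap.mul ℝ (E →L[ℝ] E)).flip T).integrable_comp hint
  have hL' : T * ∫ t in Set.Ioi (0:ℝ), f t = -1 := by
    have := (ContinuousLinearMap.mul ℝ (E →L[ℝ] E) T).integral_comp_comm hint
    simp only [ContinuousLinearMap.mul_apply'] at this
    rw [← this, hL, hf0]; simp
  have hR' : (∫ t in Set.Ioi (0:ℝ), f t) * T = -1 := by
    have := ((ContinuousLinearMap.mul ℝ (E →L[ℝ] E)).flip T).integral_comp_comm hint
    simp only [ContinuousLinearMap.flip_apply, ContinuousLinearMap.mul_apply'] at this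
    rw [← this, hR, hf0]; simp
  refine ⟨?_, ?_, ?_⟩
  · show T * (-∫ t in Set.Ioi (0:ℝ), f t) = 1
    rw [mul_neg, hL', neg_neg]
  · show (-∫ t in Set.Ioi (0:ℝ), f t) * T = 1
    rw [neg_mul, hR', neg_neg]
  · rw [norm_neg]
    calc ‖∫ t in Set.Ioi (0:ℝ), f t‖
        ≤ ∫ t in Set.Ioi (0:ℝ), C * Real.exp (-lam * t) :=
          norm_integral_le_of_norm_le hg_int hbound
      _ = C * ∫ t in Set.Ioi (0:ℝ), Real.exp (-lam * t) := integral_const_mul C _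
      _ = C / lam := by rw [aux_exp_integral lam hlam]; ring
end

section
/- (Discrete hypocoercivity, abstract form of Theorem 3.1.) Let H be a real Hilbert space, V ⊆ H a finite-dimensional subspace, Π the orthogonal projection of H onto V, L : V → H a linear map, and A a bounded linear operator on H with ‖A‖ ≤ 1/2. Let ε ∈ (0,1), λ̃ > 0 and δ ≥ 0 satisfy: (i) for all φ ∈ V, ⟨−Lφ, φ⟩ − ε⟨A(Lφ), φ⟩ − ε⟨Aφ, Lφ⟩ ≥ λ̃‖φ‖²; (ii) for all φ ∈ V, ‖(A + A*)(Lφ − Π(Lφ))‖ ≤ δ‖φ‖; and (iii) λ̃ − εδ > 0. Let G : V → V be the linear map φ ↦ Π(Lφ). Then for every φ₀ ∈ V and every t ≥ 0, ‖exp(tG)φ₀‖ ≤ √((1+ε)/(1−ε)) · e^{−λt} ‖φ₀‖, where λ = (λ̃ − εδ)/(1 + ε). -/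
open scoped RealInnerProductSpace

noncomputable instance submoduleCLMTopologicalRing
    {H : Type*} [NormedAddCommGroup H] [InnerProductSpace ℝ H]
    (V : Submodule ℝ H) : IsTopologicalRing (V →L[ℝ] V) := by
  exact @NonUnitalSeminormedRing.toIsTopologicalRing (V →L[ℝ] V) _

set_option maxHeartbeats 2000000 in
/-- Discrete hypocoercivity (abstract form of Theorem 3.1): if the modified entropy
dissipation is coercive on the Galerkin space `V` up to a discretization defect of
size `δ`, then the semigroup generated by `G = Π ∘ L` on `V` decays exponentially,
with rate `(λ̃ - εδ)/(1+ε)` and prefactor `√((1+ε)/(1-ε))`. -/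
theorem discrete_hypocoercivity
    {H : Type*} [NormedAddCommGroup H] [InnerProductSpace ℝ H] [CompleteSpace H]
    (V : Submodule ℝ H) [FiniteDimensional ℝ V]
    (L : V →ₗ[ℝ] H) (A : H →L[ℝ] H) (hA : ‖A‖ ≤ 1/2)
    (ε lamt δ : ℝ) (hε : ε ∈ Set.Ioo (0:ℝ) 1) (hlamt : 0 < lamt) (hδ : 0 ≤ δ)
    (G : V →ₗ[ℝ] V) (hG : ∀ φ : V, G φ = V.orthogonalProjectionOnto (L φ))
    (hcoercive : ∀ φ : V,
      lamt * ‖φ‖^2 ≤ ⟪-(L φ), (φ : H)⟫ - ε * ⟪A (L φ), (φ : H)⟫ - ε * ⟪A (φ : H), L φ⟫)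
    (hdefect : ∀ φ : V,
      ‖(A + ContinuousLinearMap.adjoint A) (L φ - (V.orthogonalProjectionOnto (L φ) : H))‖
        ≤ δ * ‖φ‖)
    (hgap : 0 < lamt - ε * δ) :
    ∀ φ₀ : V, ∀ t : ℝ, 0 ≤ t →
      ‖NormedSpace.exp (t • (LinearMap.toContinuousLinearMap G)) φ₀‖
        ≤ Real.sqrt ((1+ε)/(1-ε)) * Real.exp (-((lamt - ε*δ)/(1+ε)) * t) * ‖φ₀‖ := by
  obtain ⟨hε0, hε1⟩ := hε
  have h1ε : (0:ℝ) < 1 + ε := by linarith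
  have h1ε' : (0:ℝ) < 1 - ε := by linarith
  intro φ₀ t ht
  set Gc := LinearMap.toContinuousLinearMap G with hGcdef
  set lam := (lamt - ε*δ)/(1+ε) with hlamdef
  have hlam_pos : 0 < lam := div_pos hgap h1ε
  have hlam_mul : lam * (1+ε) = lamt - ε*δ := div_mul_cancel₀ _ (ne_of_gt h1ε)
  set u : ℝ → V := fun s => NormedSpace.exp (s • Gc) φ₀ with hudef
  have hu : ∀ s, HasDerivAt u (Gc (u s)) s := by
    intro s
    have h1 : HasDerivAt (fun s : ℝ => NormedSpace.exp (s • Gc))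
        (Gc * NormedSpace.exp (s • Gc)) s := hasDerivAt_exp_smul_const' Gc s
    simpa using h1.clm_apply (hasDerivAt_const s φ₀)
  set v : ℝ → H := fun s => (u s : H) with hvdef
  have hv : ∀ s, HasDerivAt v ((Gc (u s) : H)) s := fun s =>
    (V.subtypeL.hasFDerivAt.comp_hasDerivAt s (hu s))
  -- the modified entropy along the flow
  set f : ℝ → ℝ := fun s => ⟪v s, v s⟫ + 2*ε*⟪A (v s), v s⟫ with hfdef
  set F : ℝ → ℝ := fun s =>
    (⟪v s, (Gc (u s) : H)⟫ + ⟪(Gc (u s) : H), v s⟫)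
      + 2*ε*(⟪A (v s), (Gc (u s) : H)⟫ + ⟪A ((Gc (u s) : H)), v s⟫) with hFdef
  have hf : ∀ s, HasDerivAt f (F s) s := by
    intro s
    have h2 : HasDerivAt (fun s => A (v s)) (A ((Gc (u s) : H))) s :=
      A.hasFDerivAt.comp_hasDerivAt s (hv s)
    exact ((hv s).inner ℝ (hv s)).add (((h2.inner ℝ (hv s)).const_mul (2*ε)))
  -- norms of coerced elements
  have hnorm : ∀ φ : V, ‖(φ : H)‖ = ‖φ‖ := fun φ => rfl
  -- bound on the A-inner term
  have hAbound : ∀ φ : V, |⟪A (φ : H), (φ : H)⟫| ≤ (1/2) * ‖φ‖^2 := by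
    intro φ
    have h1 : |⟪A (φ : H), (φ : H)⟫| ≤ ‖A (φ : H)‖ * ‖(φ : H)‖ :=
      abs_real_inner_le_norm _ _
    have h2 : ‖A (φ : H)‖ ≤ ‖A‖ * ‖(φ : H)‖ := A.le_opNorm _
    have h3 : ‖A‖ * ‖(φ : H)‖ ≤ (1/2) * ‖(φ : H)‖ := by
      apply mul_le_mul_of_nonneg_right hA (norm_nonneg _)
    calc |⟪A (φ : H), (φ : H)⟫| ≤ ‖A (φ : H)‖ * ‖(φ : H)‖ := h1
      _ ≤ ((1/2) * ‖(φ : H)‖) * ‖(φ : H)‖ :=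
        mul_le_mul_of_nonneg_right (le_trans h2 h3) (norm_nonneg _)
      _ = (1/2) * ‖φ‖^2 := by rw [hnorm]; ring
  -- key dissipation estimate
  have key : ∀ φ : V,
      (⟪(φ : H), ((G φ : V) : H)⟫ + ⟪((G φ : V) : H), (φ : H)⟫)
        + 2*ε*(⟪A (φ : H), ((G φ : V) : H)⟫ + ⟪A (((G φ : V) : H)), (φ : H)⟫)
      ≤ -(2*lam) * (⟪(φ : H), (φ : H)⟫ + 2*ε*⟪A (φ : H), (φ : H)⟫) := by
    intro φ
    set w : H := L φ - (V.orthogonalProjectionOnto (L φ) : H) with hw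
    have hwmem : w ∈ Vᗮ := V.sub_starProjection_mem_orthogonal (L φ)
    have hGφ : ((G φ : V) : H) = L φ - w := by rw [hG φ, hw]; abel
    have horth : ⟪(φ : H), w⟫ = 0 :=
      Submodule.inner_right_of_mem_orthogonal φ.2 hwmem
    have horth' : ⟪w, (φ : H)⟫ = 0 := by rw [real_inner_comm]; exact horth
    -- the defect term
    have hE : ⟪A (φ : H), w⟫ + ⟪A w, (φ : H)⟫
        = ⟪(A + ContinuousLinearMap.adjoint A) w, (φ : H)⟫ := by
      have h1 : ⟪A (φ : H), w⟫ = ⟪ContinuousLinearMap.adjoint A w, (φ : H)⟫ := by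
        rw [ContinuousLinearMap.adjoint_inner_left, real_inner_comm]
      rw [h1, ContinuousLinearMap.add_apply, inner_add_left]
      ring
    have hEbound : |⟪(A + ContinuousLinearMap.adjoint A) w, (φ : H)⟫| ≤ δ * ‖φ‖^2 := by
      calc |⟪(A + ContinuousLinearMap.adjoint A) w, (φ : H)⟫|
          ≤ ‖(A + ContinuousLinearMap.adjoint A) w‖ * ‖(φ : H)‖ :=
            abs_real_inner_le_norm _ _
        _ ≤ (δ * ‖φ‖) * ‖(φ : H)‖ :=
            mul_le_mul_of_nonneg_right (by rw [hw]; exact hdefect φ) (norm_nonneg _)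
        _ = δ * ‖φ‖^2 := by rw [hnorm]; ring
    have hcoer := hcoercive φ
    rw [inner_neg_left] at hcoer
    have hinner_self : ⟪(φ : H), (φ : H)⟫ = ‖φ‖^2 := by
      rw [real_inner_self_eq_norm_sq, hnorm]
    have hAb := hAbound φ
    -- expand everything
    have expand1 : ⟪(φ : H), ((G φ : V) : H)⟫ = ⟪L φ, (φ : H)⟫ := by
      rw [hGφ, inner_sub_right, horth, real_inner_comm]; ring
    have expand2 : ⟪((G φ : V) : H), (φ : H)⟫ = ⟪L φ, (φ : H)⟫ := by
      rw [hGφ, inner_sub_left, horth']; ring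
    have expand3 : ⟪A (φ : H), ((G φ : V) : H)⟫ = ⟪A (φ : H), L φ⟫ - ⟪A (φ : H), w⟫ := by
      rw [hGφ, inner_sub_right]
    have expand4 : ⟪A (((G φ : V) : H)), (φ : H)⟫
        = ⟪A (L φ), (φ : H)⟫ - ⟪A w, (φ : H)⟫ := by
      rw [hGφ, map_sub, inner_sub_left]
    rw [expand1, expand2, expand3, expand4, hinner_self]
    have habs1 := abs_le.mp hEbound
    have habs2 := abs_le.mp hAb
    nlinarith [hcoer, habs1.1, habs1.2, habs2.1, habs2.2, hE, hlam_mul,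
      mul_pos hlam_pos hε0, sq_nonneg ‖φ‖, mul_nonneg hε0.le (sq_nonneg ‖φ‖)]
  -- Gronwall
  have hFle : ∀ s, F s ≤ -(2*lam) * f s := by
    intro s
    have := key (u s)
    have hGcu : Gc (u s) = G (u s) := rfl
    simpa [hFdef, hfdef, hvdef, hGcu] using this
  set g : ℝ → ℝ := fun s => f s * Real.exp (2*lam*s) with hgdef
  have hgderiv : ∀ s, HasDerivAt g
      (F s * Real.exp (2*lam*s) + f s * (Real.exp (2*lam*s) * (2*lam))) s := by
    intro s
    have hexp : HasDerivAt (fun s : ℝ => Real.exp (2*lam*s))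
        (Real.exp (2*lam*s) * (2*lam)) s := by
      have h1 : HasDerivAt (fun s : ℝ => 2*lam*s) (2*lam) s := by
        simpa using (hasDerivAt_id s).const_mul (2*lam)
      exact h1.exp
    exact (hf s).mul hexp
  have hganti : Antitone g := by
    apply antitone_of_deriv_nonpos
    · exact fun s => (hgderiv s).differentiableAt
    · intro s
      rw [(hgderiv s).deriv]
      have h1 : F s + 2*lam * f s ≤ 0 := by linarith [hFle s]
      have h2 : (0:ℝ) < Real.exp (2*lam*s) := Real.exp_pos _
      nlinarith
  have hgmono : g t ≤ g 0 := hganti ht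
  have hu0 : u 0 = φ₀ := by
    simp [hudef, NormedSpace.exp_zero]
  -- bounds on f
  have hflb : (1-ε) * ‖u t‖^2 ≤ f t := by
    have h1 := hAbound (u t)
    have h2 : ⟪v t, v t⟫ = ‖u t‖^2 := by
      rw [hvdef]; rw [real_inner_self_eq_norm_sq]; rfl
    have habs := abs_le.mp h1
    simp only [hfdef]
    nlinarith [habs.1, habs.2, mul_nonneg hε0.le (sq_nonneg ‖u t‖)]
  have hfub : f 0 ≤ (1+ε) * ‖φ₀‖^2 := by
    have h1 := hAbound (u 0)
    have hv0 : v 0 = ((u 0 : V) : H) := rfl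
    have h2 : ⟪v 0, v 0⟫ = ‖φ₀‖^2 := by
      rw [hv0, real_inner_self_eq_norm_sq, hu0]; rfl
    have habs := abs_le.mp h1
    simp only [hfdef]
    rw [h2, hv0, hu0] at *
    nlinarith [habs.1, habs.2]
  -- combine
  have hchain : (1-ε) * ‖u t‖^2 * Real.exp (2*lam*t) ≤ (1+ε) * ‖φ₀‖^2 := by
    have h1 : f t * Real.exp (2*lam*t) ≤ f 0 := by
      simpa [hgdef, mul_zero, Real.exp_zero] using hgmono
    nlinarith [hflb, hfub, Real.exp_pos (2*lam*t)]
  set R : ℝ := Real.sqrt ((1+ε)/(1-ε)) * Real.exp (-lam * t) * ‖φ₀‖ with hRdef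
  have hEne : Real.exp (2*lam*t) ≠ 0 := (Real.exp_pos _).ne'
  have hP : Real.exp (-lam*t)^2 = (Real.exp (2*lam*t))⁻¹ := by
    rw [sq, ← Real.exp_add, ← Real.exp_neg]
    congr 1; ring
  have hsq : ‖u t‖^2 ≤ R^2 := by
    have hs : Real.sqrt ((1+ε)/(1-ε))^2 = (1+ε)/(1-ε) :=
      Real.sq_sqrt (by positivity)
    rw [hRdef, mul_pow, mul_pow, hs, hP]
    have heq : (1+ε)/(1-ε) * (Real.exp (2*lam*t))⁻¹ * ‖φ₀‖^2
        = ((1+ε) * ‖φ₀‖^2) / ((1-ε) * Real.exp (2*lam*t)) := by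
      field_simp
    rw [heq, le_div_iff₀ (by positivity)]
    nlinarith [hchain]
  calc ‖u t‖ = Real.sqrt (‖u t‖^2) := (Real.sqrt_sq (norm_nonneg _)).symm
    _ ≤ Real.sqrt (R^2) := Real.sqrt_le_sqrt hsq
    _ = R := Real.sqrt_sq (by positivity)
end

section
/- (Abstract consistency error estimate, core of Theorem 3.5.) Let H be a real Hilbert space, V ⊆ H a finite-dimensional subspace, Π the orthogonal projection of H onto V, and L : H → H a linear map. Assume that the map G : V → V, φ ↦ Π(Lφ), is bijective and that c ≥ 0 satisfies ‖G⁻¹ψ‖ ≤ c‖ψ‖ for all ψ ∈ V. Let Φ, R ∈ H satisfy −LΦ = R, and let Φ_V ∈ V satisfy −Π(LΦ_V) = ΠR. Then ‖Φ_V − ΠΦ‖ ≤ c · ‖Π(L(Φ − ΠΦ))‖. -/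
/-- Abstract consistency error estimate (core of Theorem 3.5): if the projected operator
`G = Π ∘ L` is invertible on the Galerkin space `V` with inverse bounded by `c`, and
`-LΦ = R`, `-Π(LΦ_V) = ΠR`, then `‖Φ_V - ΠΦ‖ ≤ c ‖Π(L(Φ - ΠΦ))‖`. -/
theorem consistency_error_estimate
    {H : Type*} [NormedAddCommGroup H] [InnerProductSpace ℝ H] [CompleteSpace H]
    (V : Submodule ℝ H) [FiniteDimensional ℝ V]
    (L : H →ₗ[ℝ] H)
    (G : V →ₗ[ℝ] V) (hG : ∀ φ : V, G φ = Submodule.orthogonalProjectionOnto V (L φ))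
    (hGbij : Function.Bijective G)
    (c : ℝ) (hc : 0 ≤ c) (hGinv : ∀ φ ψ : V, G φ = ψ → ‖φ‖ ≤ c * ‖ψ‖)
    (Φ R : H) (hΦ : -(L Φ) = R)
    (ΦV : V) (hΦV : -(Submodule.orthogonalProjectionOnto V (L ΦV)) = Submodule.orthogonalProjectionOnto V R) :
    ‖(ΦV : H) - (Submodule.orthogonalProjectionOnto V Φ : H)‖
      ≤ c * ‖(Submodule.orthogonalProjectionOnto V (L (Φ - (Submodule.orthogonalProjectionOnto V Φ : H))) : V)‖ := by
  have h1 : (Submodule.orthogonalProjectionOnto V (L ΦV)) = Submodule.orthogonalProjectionOnto V (L Φ) := by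
    have h := hΦV
    rw [← hΦ, map_neg] at h
    exact neg_injective h
  have key : G (ΦV - Submodule.orthogonalProjectionOnto V Φ) =
      Submodule.orthogonalProjectionOnto V (L (Φ - (Submodule.orthogonalProjectionOnto V Φ : H))) := by
    rw [map_sub, hG, hG, map_sub, map_sub, h1]
  have hle := hGinv _ _ key
  have hnorm : ‖(ΦV : H) - (Submodule.orthogonalProjectionOnto V Φ : H)‖
      = ‖ΦV - Submodule.orthogonalProjectionOnto V Φ‖ := by
    norm_cast
  rw [hnorm]
  exact hle
end

section
/- (Lemma 4.1: weighted Fourier approximation.) For every s ∈ ℕ there exists M_s ≥ 0 such that for every smooth function φ : 𝕋 → ℝ and every integer K ≥ 1, ‖φ − Π_K^q φ‖_{L²(ν)} ≤ (M_s / K^s) · (Σ_{j=0}^{s} ‖φ^{(j)}‖²_{L²(ν)})^{1/2}. -/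
set_option maxHeartbeats 1000000


open MeasureTheory Real
open scoped ContDiff

/-- The normalization constant `Zν`. -/
noncomputable def Znu (β : ℝ) (V : ℝ → ℝ) : ℝ :=
  ∫ q in Set.Ioc (0:ℝ) (2*π), Real.exp (-(β * V q))

/-- The marginal measure in position: `ν(dq) = Zν⁻¹ e^{-βV(q)} dq` on the torus,
realized as a measure on the fundamental domain `(0, 2π]`. -/
noncomputable def nuMeas (β : ℝ) (V : ℝ → ℝ) : Measure ℝ :=
  (ENNReal.ofReal (Znu β V)⁻¹) •
    ((volume.restrict (Set.Ioc (0:ℝ) (2*π))).withDensity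
      fun q => ENNReal.ofReal (Real.exp (-(β * V q))))

/-- The weighted Fourier functions: `G₀ = (Zν/2π)^{1/2} e^{βV/2}`,
`G_{2k} = (Zν/π)^{1/2} cos(kq) e^{βV/2}`, `G_{2k-1} = (Zν/π)^{1/2} sin(kq) e^{βV/2}`. -/
noncomputable def Gfun (β : ℝ) (V : ℝ → ℝ) (j : ℕ) (q : ℝ) : ℝ :=
  if j = 0 then Real.sqrt (Znu β V / (2*π)) * Real.exp (β * V q / 2)
  else if j % 2 = 0 then
    Real.sqrt (Znu β V / π) * Real.cos ((j/2 : ℕ) * q) * Real.exp (β * V q / 2)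
  else Real.sqrt (Znu β V / π) * Real.sin (((j+1)/2 : ℕ) * q) * Real.exp (β * V q / 2)

/-- The orthogonal projection `Π_K^q` of `L²(ν)` onto `span{G₀, …, G_{2K-2}}`. -/
noncomputable def projq (β : ℝ) (V : ℝ → ℝ) (K : ℕ) (φ : ℝ → ℝ) (q : ℝ) : ℝ :=
  ∑ j ∈ Finset.range (2*K - 1),
    (∫ q', φ q' * Gfun β V j q' ∂(nuMeas β V)) * Gfun β V j q

namespace WFA

lemma two_pi_pos : (0:ℝ) < 2*π := by positivity

lemma Znu_pos {β : ℝ} {V : ℝ → ℝ} (hV : Continuous V) : 0 < Znu β V := by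
  have : Znu β V = ∫ q in (0:ℝ)..(2*π), Real.exp (-(β * V q)) := by
    rw [intervalIntegral.integral_of_le two_pi_pos.le]; rfl
  rw [this]
  apply intervalIntegral.intervalIntegral_pos_of_pos_on
  · exact (Real.continuous_exp.comp ((continuous_const.mul hV).neg)).intervalIntegrable _ _
  · intro x _; exact Real.exp_pos _
  · exact two_pi_pos

lemma integral_nu {β : ℝ} {V : ℝ → ℝ} (hV : Continuous V) (f : ℝ → ℝ) :
    ∫ q, f q ∂(nuMeas β V)
      = (Znu β V)⁻¹ * ∫ q in Set.Ioc (0:ℝ) (2*π), f q * Real.exp (-(β * V q)) := by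
  have hmeas : Measurable fun q : ℝ => (Real.exp (-(β * V q))).toNNReal :=
    (continuous_real_toNNReal.comp
      (Real.continuous_exp.comp ((continuous_const.mul hV).neg))).measurable
  have h1 : (fun q : ℝ => ENNReal.ofReal (Real.exp (-(β * V q))))
      = fun q : ℝ => (((Real.exp (-(β * V q))).toNNReal : NNReal) : ENNReal) := rfl
  rw [nuMeas, integral_smul_measure, h1,
    integral_withDensity_eq_integral_smul hmeas f,
    ENNReal.toReal_ofReal (inv_nonneg.mpr (Znu_pos hV).le)]
  rw [smul_eq_mul]
  congr 1
  refine setIntegral_congr_fun measurableSet_Ioc fun x _ => ?_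
  rw [NNReal.smul_def, Real.coe_toNNReal _ (Real.exp_nonneg _)]; exact mul_comm _ _

lemma sum_range_odd (t : ℕ → ℝ) (N : ℕ) :
    ∑ j ∈ Finset.range (2*N+1), t j = t 0 + ∑ k ∈ Finset.range N, (t (2*k+1) + t (2*k+2)) := by
  induction N with
  | zero => simp
  | succ n ih =>
    have h : 2*(n+1)+1 = (2*n+1) + 1 + 1 := by ring
    rw [h, Finset.sum_range_succ, Finset.sum_range_succ, ih, Finset.sum_range_succ]
    ring

lemma sum_Icc_int (f : ℤ → ℂ) (m : ℕ) :
    ∑ n ∈ Finset.Icc (-(m:ℤ)) m, f n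
      = f 0 + ∑ k ∈ Finset.range m, (f (k+1) + f (-(k+1:ℤ))) := by
  induction m with
  | zero => simp
  | succ n ih =>
    have hins : Finset.Icc (-(n+1:ℤ)) (n+1)
        = insert (-(n+1:ℤ)) (insert ((n+1:ℤ)) (Finset.Icc (-(n:ℤ)) n)) := by
      ext x; simp only [Finset.mem_Icc, Finset.mem_insert]; push_cast; omega
    push_cast
    rw [hins, Finset.sum_insert, Finset.sum_insert, ih, Finset.sum_range_succ]
    · ring
    · simp only [Finset.mem_Icc]; omega
    · simp only [Finset.mem_insert, Finset.mem_Icc]; push_cast; omega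

lemma periodic_deriv {f : ℝ → ℝ} (hf : Function.Periodic f (2*π)) :
    Function.Periodic (deriv f) (2*π) := by
  intro x
  have : f = fun y => f (y + 2*π) := by funext y; rw [hf y]
  conv_lhs => rw [show deriv f (x + 2*π) = deriv (fun y => f (y + 2*π)) x by
    rw [deriv_comp_add_const]]
  rw [← this]

lemma periodic_iteratedDeriv {f : ℝ → ℝ} (hf : Function.Periodic f (2*π)) (n : ℕ) :
    Function.Periodic (iteratedDeriv n f) (2*π) := by
  induction n with
  | zero => simpa using hf
  | succ n ih => rw [iteratedDeriv_succ]; exact periodic_deriv ih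


local instance fact2pi : Fact ((0:ℝ) < 2*π) := ⟨two_pi_pos⟩

noncomputable def cC (g : ℝ → ℝ) (n : ℤ) : ℂ :=
  fourierCoeff (AddCircle.liftIoc (2*π) 0 (fun x => ((g x : ℝ) : ℂ))) n

lemma cC_eq_setIntegral {g : ℝ → ℝ} (n : ℤ) :
    cC g n = (1/(2*π) : ℂ) * ∫ x in Set.Ioc (0:ℝ) (2*π),
      (fourier (-n) (x : AddCircle (2*π)) * (g x : ℂ)) := by
  rw [cC, fourierCoeff_eq_intervalIntegral _ n 0,
    intervalIntegral.integral_of_le (by rw [zero_add]; exact two_pi_pos.le),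
    show (0:ℝ) + 2*π = 2*π from zero_add _]
  simp only [Complex.real_smul, smul_eq_mul]
  push_cast
  congr 1
  exact setIntegral_congr_fun measurableSet_Ioc fun x hx => by
    rw [AddCircle.liftIoc_coe_apply (by rwa [zero_add])]

lemma cC_deriv {g : ℝ → ℝ} (hg : ContDiff ℝ ∞ g) (hper : Function.Periodic g (2*π))
    {n : ℤ} (hn : n ≠ 0) : ‖cC g n‖ = ‖cC (deriv g) n‖ / |(n:ℝ)| := by
  have hg' : ContDiff ℝ ∞ (deriv g) := (contDiff_infty_iff_deriv.mp hg).2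
  have key : cC g n = (Complex.I * n)⁻¹ * cC (deriv g) n := by
    have h1 : cC g n = fourierCoeffOn (lt_add_of_pos_right 0 fact2pi.out)
        (fun x => ((g x : ℝ) : ℂ)) n := fourierCoeff_liftIoc_eq _ n
    have h2 : cC (deriv g) n = fourierCoeffOn (lt_add_of_pos_right 0 fact2pi.out)
        (fun x => ((deriv g x : ℝ) : ℂ)) n := fourierCoeff_liftIoc_eq _ n
    rw [h1, h2]
    rw [fourierCoeffOn_of_hasDerivAt (lt_add_of_pos_right 0 fact2pi.out) hn
      (f' := fun x => ((deriv g x : ℝ) : ℂ))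
      (fun x _ => ((hg.differentiable (by simp)).differentiableAt.hasDerivAt).ofReal_comp)
      ((Complex.continuous_ofReal.comp hg'.continuous).intervalIntegrable _ _)]
    rw [show g (0 + 2*π) = g 0 from hper 0]
    have hnC : (n:ℂ) ≠ 0 := Int.cast_ne_zero.mpr hn
    have hπ : (π:ℂ) ≠ 0 := Complex.ofReal_ne_zero.mpr Real.pi_ne_zero
    field_simp
    push_cast; ring
  rw [key, norm_mul, norm_inv, norm_mul, Complex.norm_I, one_mul]
  rw [show ‖((n:ℤ):ℂ)‖ = |(n:ℝ)| from by
    rw [show ((n:ℤ):ℂ) = (((n:ℝ)):ℂ) from by push_cast; rfl, Complex.norm_real, Real.norm_eq_abs]]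
  rw [div_eq_inv_mul]

lemma periodic_deriv' {g : ℝ → ℝ} (hper : Function.Periodic g (2*π)) :
    Function.Periodic (deriv g) (2*π) := by
  intro x
  have hcong : deriv g (x + 2*π) = deriv (fun y => g (y + 2*π)) x := by
    rw [deriv_comp_add_const]
  rw [hcong, show (fun y => g (y + 2*π)) = g from funext fun y => hper y]

lemma cC_iteratedDeriv {g : ℝ → ℝ} (hg : ContDiff ℝ ∞ g)
    (hper : Function.Periodic g (2*π)) {n : ℤ} (hn : n ≠ 0) (s : ℕ) :
    ‖cC g n‖ = ‖cC (iteratedDeriv s g) n‖ / |(n:ℝ)|^s := by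
  induction s generalizing g with
  | zero => simp [iteratedDeriv_zero]
  | succ s ih =>
    have hg' : ContDiff ℝ ∞ (deriv g) := (contDiff_infty_iff_deriv.mp hg).2
    rw [cC_deriv hg hper hn, ih hg' (periodic_deriv' hper), iteratedDeriv_succ']
    rw [div_div, pow_succ]

lemma memLp_liftIoc {g : ℝ → ℝ} (hg : Continuous g) :
    MemLp (AddCircle.liftIoc (2*π) 0 (fun x => ((g x : ℝ) : ℂ))) 2 AddCircle.haarAddCircle := by
  obtain ⟨C, hC⟩ := (isCompact_Icc (a := (0:ℝ)) (b := 2*π)).exists_bound_of_continuousOn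
    hg.continuousOn
  have hmeas : Measurable (AddCircle.liftIoc (2*π) 0 (fun x => ((g x : ℝ) : ℂ))) := by
    have heq : AddCircle.liftIoc (2*π) 0 (fun x => ((g x : ℝ) : ℂ))
        = fun t => ((g ((AddCircle.equivIoc (2*π) 0 t : ℝ)) : ℂ)) := rfl
    rw [heq]
    exact Complex.measurable_ofReal.comp (hg.measurable.comp
      (measurable_subtype_coe.comp (AddCircle.measurableEquivIoc (T := 2*π) 0).measurable))
  refine MemLp.of_bound hmeas.aestronglyMeasurable C (Filter.Eventually.of_forall fun t => ?_)
  have hmem := (AddCircle.equivIoc (2*π) 0 t).2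
  have heq2 : AddCircle.liftIoc (2*π) 0 (fun x => ((g x : ℝ) : ℂ)) t
      = ((g ((AddCircle.equivIoc (2*π) 0 t : ℝ)) : ℂ)) := rfl
  rw [heq2, Complex.norm_real]
  exact hC _ ⟨hmem.1.le, by simpa using hmem.2⟩

lemma parseval {g : ℝ → ℝ} (hg : Continuous g) :
    (Summable fun n : ℤ => ‖cC g n‖^2) ∧
    ∑' n : ℤ, ‖cC g n‖^2 = (2*π)⁻¹ * ∫ x in Set.Ioc (0:ℝ) (2*π), (g x)^2 := by
  have hm := memLp_liftIoc hg
  set fL := hm.toLp _ with hfL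
  have hcoeff : ∀ n : ℤ, fourierCoeff (fL : AddCircle (2*π) → ℂ) n = cC g n := by
    intro n
    refine integral_congr_ae ?_
    filter_upwards [hm.coeFn_toLp] with t ht
    rw [ht]
  have hpars := tsum_sq_fourierCoeff fL
  have hrepr : ∀ n : ℤ, fourierBasis.repr fL n = cC g n := fun n => by
    rw [fourierBasis_repr]; exact hcoeff n
  constructor
  · have hmem := (memℓp_gen_iff (p := (2:ENNReal)) (E := fun _ : ℤ => ℂ)
      (by norm_num)).mp (lp.memℓp (fourierBasis.repr fL))
    have heq : (fun n : ℤ => ‖fourierBasis.repr fL n‖ ^ ((2:ENNReal)).toReal)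
        = fun n : ℤ => ‖cC g n‖^2 := by
      funext n
      rw [hrepr n, show ((2:ENNReal).toReal) = ((2:ℕ):ℝ) by norm_num, Real.rpow_natCast]
    rwa [heq] at hmem
  · have h1 : ∑' n : ℤ, ‖cC g n‖^2
        = ∫ t : AddCircle (2*π), ‖fL t‖^2 ∂AddCircle.haarAddCircle := by
      rw [← hpars]
      exact tsum_congr fun n => by rw [hcoeff n]
    rw [h1]
    have h2 : ∫ t : AddCircle (2*π), ‖fL t‖^2 ∂AddCircle.haarAddCircle
        = ∫ t : AddCircle (2*π),
            ‖AddCircle.liftIoc (2*π) 0 (fun x => ((g x : ℝ) : ℂ)) t‖^2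
            ∂AddCircle.haarAddCircle := by
      refine integral_congr_ae ?_
      filter_upwards [hm.coeFn_toLp] with t ht
      rw [ht]
    rw [h2]
    have h3 : ∫ t : AddCircle (2*π),
          ‖AddCircle.liftIoc (2*π) 0 (fun x => ((g x : ℝ) : ℂ)) t‖^2
          ∂AddCircle.haarAddCircle
        = (2*π)⁻¹ * ∫ t : AddCircle (2*π),
            ‖AddCircle.liftIoc (2*π) 0 (fun x => ((g x : ℝ) : ℂ)) t‖^2 ∂volume := by
      rw [AddCircle.volume_eq_smul_haarAddCircle, integral_smul_measure,
        ENNReal.toReal_ofReal two_pi_pos.le, smul_eq_mul, ← mul_assoc,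
        inv_mul_cancel₀ two_pi_pos.ne', one_mul]
    rw [h3]
    congr 1
    rw [← AddCircle.intervalIntegral_preimage (2*π) 0
      (fun t => ‖AddCircle.liftIoc (2*π) 0 (fun x => ((g x : ℝ) : ℂ)) t‖^2)]
    rw [intervalIntegral.integral_of_le (by rw [zero_add]; exact two_pi_pos.le),
      show (0:ℝ) + 2*π = 2*π from zero_add _]
    refine setIntegral_congr_fun measurableSet_Ioc fun x hx => ?_
    rw [AddCircle.liftIoc_coe_apply (by rwa [zero_add]), Complex.norm_real,
      Real.norm_eq_abs, sq_abs]


noncomputable def Icos (g : ℝ → ℝ) (r : ℝ) : ℝ :=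
  ∫ y in Set.Ioc (0:ℝ) (2*π), g y * Real.cos (r*y)

noncomputable def Isin (g : ℝ → ℝ) (r : ℝ) : ℝ :=
  ∫ y in Set.Ioc (0:ℝ) (2*π), g y * Real.sin (r*y)

noncomputable def SKr (g : ℝ → ℝ) (K : ℕ) (x : ℝ) : ℝ :=
  (2*π)⁻¹ * (∫ y in Set.Ioc (0:ℝ) (2*π), g y)
  + ∑ k ∈ Finset.range (K-1),
      (π⁻¹ * Icos g ((k:ℝ)+1) * Real.cos (((k:ℝ)+1)*x)
      + π⁻¹ * Isin g ((k:ℝ)+1) * Real.sin (((k:ℝ)+1)*x))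

lemma Icos_neg (g : ℝ → ℝ) (r : ℝ) : Icos g (-r) = Icos g r := by
  unfold Icos
  refine setIntegral_congr_fun measurableSet_Ioc fun y _ => ?_
  rw [neg_mul, Real.cos_neg]

lemma Isin_neg (g : ℝ → ℝ) (r : ℝ) : Isin g (-r) = -Isin g r := by
  unfold Isin
  rw [← integral_neg]
  refine setIntegral_congr_fun measurableSet_Ioc fun y _ => ?_
  rw [neg_mul, Real.sin_neg, mul_neg]

lemma fourier_eq (j : ℤ) (y : ℝ) :
    fourier j (y : AddCircle (2*π))
      = ((Real.cos (j*y) : ℝ):ℂ) + ((Real.sin (j*y) : ℝ):ℂ) * Complex.I := by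
  rw [fourier_coe_apply]
  rw [show (2*(π:ℂ)*Complex.I*(j:ℂ)*(y:ℂ)/((2*π:ℝ):ℂ)) = (((j*y:ℝ):ℂ)) * Complex.I from by
    have h : ((2*π:ℝ):ℂ) ≠ 0 := Complex.ofReal_ne_zero.mpr two_pi_pos.ne'
    rw [div_eq_iff h]
    push_cast
    ring]
  rw [Complex.exp_mul_I, ← Complex.ofReal_cos, ← Complex.ofReal_sin]

lemma integral_fourier_mul {g : ℝ → ℝ} (hg : Continuous g) (j : ℤ) :
    ∫ y in Set.Ioc (0:ℝ) (2*π), (fourier j (y : AddCircle (2*π)) * (g y : ℂ))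
      = ((Icos g j : ℝ):ℂ) + ((Isin g j : ℝ):ℂ) * Complex.I := by
  have hptw : ∀ y : ℝ, fourier j (y : AddCircle (2*π)) * (g y : ℂ)
      = ((g y * Real.cos ((j:ℝ)*y) : ℝ):ℂ) + ((g y * Real.sin ((j:ℝ)*y) : ℝ):ℂ) • Complex.I := by
    intro y
    rw [fourier_eq]
    push_cast
    rw [smul_eq_mul]
    ring
  rw [setIntegral_congr_fun measurableSet_Ioc fun y _ => hptw y]
  have h1 : IntegrableOn (fun y => ((g y * Real.cos ((j:ℝ)*y) : ℝ):ℂ)) (Set.Ioc (0:ℝ) (2*π)) volume :=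
    (Complex.continuous_ofReal.comp (hg.mul (Real.continuous_cos.comp
      (continuous_const.mul continuous_id)))).integrableOn_Ioc
  have h2 : IntegrableOn (fun y => ((g y * Real.sin ((j:ℝ)*y) : ℝ):ℂ)) (Set.Ioc (0:ℝ) (2*π)) volume :=
    (Complex.continuous_ofReal.comp (hg.mul (Real.continuous_sin.comp
      (continuous_const.mul continuous_id)))).integrableOn_Ioc
  rw [integral_add h1 (h2.smul_const Complex.I), integral_smul_const]
  rw [show (∫ y in Set.Ioc (0:ℝ) (2*π), ((g y * Real.cos ((j:ℝ)*y) : ℝ):ℂ))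
      = ((Icos g j : ℝ):ℂ) from integral_ofReal,
    show (∫ y in Set.Ioc (0:ℝ) (2*π), ((g y * Real.sin ((j:ℝ)*y) : ℝ):ℂ))
      = ((Isin g j : ℝ):ℂ) from integral_ofReal, smul_eq_mul]

lemma SC_real {g : ℝ → ℝ} (hg : Continuous g) (K : ℕ) (x : ℝ) :
    ∑ n ∈ Finset.Icc (-((K-1:ℕ):ℤ)) ((K-1:ℕ):ℤ), cC g n * fourier n (x : AddCircle (2*π))
      = ((SKr g K x : ℝ) : ℂ) := by
  have hπ : (π:ℂ) ≠ 0 := Complex.ofReal_ne_zero.mpr Real.pi_ne_zero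
  rw [sum_Icc_int (fun n => cC g n * fourier n (x : AddCircle (2*π))) (K-1)]
  have hzero : cC g 0 * fourier 0 (x : AddCircle (2*π))
      = (((2*π)⁻¹ * (∫ y in Set.Ioc (0:ℝ) (2*π), g y) : ℝ) : ℂ) := by
    rw [fourier_zero, mul_one, cC_eq_setIntegral, show -(0:ℤ) = 0 from neg_zero,
      integral_fourier_mul hg 0]
    have hIc : Icos g ((0:ℤ):ℝ) = ∫ y in Set.Ioc (0:ℝ) (2*π), g y := by
      unfold Icos
      refine setIntegral_congr_fun measurableSet_Ioc fun y _ => ?_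
      norm_num
    have hIs : Isin g ((0:ℤ):ℝ) = 0 := by
      have : Isin g ((0:ℤ):ℝ) = ∫ y in Set.Ioc (0:ℝ) (2*π), (0:ℝ) := by
        unfold Isin
        refine setIntegral_congr_fun measurableSet_Ioc fun y _ => ?_
        norm_num
      rw [this, integral_zero]
    rw [hIc, hIs]
    push_cast
    ring
  have hpair : ∀ k : ℕ,
      cC g ((k:ℤ)+1) * fourier ((k:ℤ)+1) (x : AddCircle (2*π))
        + cC g (-((k:ℤ)+1)) * fourier (-((k:ℤ)+1)) (x : AddCircle (2*π))
      = ((π⁻¹ * Icos g ((k:ℝ)+1) * Real.cos (((k:ℝ)+1)*x)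
          + π⁻¹ * Isin g ((k:ℝ)+1) * Real.sin (((k:ℝ)+1)*x) : ℝ) : ℂ) := by
    intro k
    rw [cC_eq_setIntegral, cC_eq_setIntegral,
      show (-(-((k:ℤ)+1)) : ℤ) = ((k:ℤ)+1) from by ring,
      integral_fourier_mul hg, integral_fourier_mul hg, fourier_eq, fourier_eq]
    rw [show ((-((k:ℤ)+1) : ℤ) : ℝ) = -(((k:ℤ)+1 : ℤ):ℝ) from by push_cast; ring]
    rw [Icos_neg, Isin_neg]
    rw [show -((((k:ℤ)+1):ℤ):ℝ) * x = -(((((k:ℤ)+1):ℤ):ℝ) * x) from by ring,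
      Real.cos_neg, Real.sin_neg]
    rw [show (((k:ℤ)+1 : ℤ):ℝ) = (k:ℝ)+1 from by push_cast; ring]
    set a := Icos g ((k:ℝ)+1)
    set b := Isin g ((k:ℝ)+1)
    set c := Real.cos (((k:ℝ)+1)*x)
    set d := Real.sin (((k:ℝ)+1)*x)
    push_cast
    linear_combination (-(((b:ℝ):ℂ) * ((d:ℝ):ℂ))/(π:ℂ)) * Complex.I_sq
  rw [hzero]
  rw [Finset.sum_congr rfl (fun k _ => hpair k)]
  rw [SKr, ← Complex.ofReal_sum]
  push_cast
  ring

lemma Lp_coeFn_sum {ι : Type*} (F : Finset ι)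
    (f : ι → Lp ℂ 2 (AddCircle.haarAddCircle (T := 2*π))) :
    (↑↑(∑ n ∈ F, f n) : AddCircle (2*π) → ℂ)
      =ᵐ[AddCircle.haarAddCircle] fun t => ∑ n ∈ F, f n t := by
  classical
  induction F using Finset.induction_on with
  | empty => simp only [Finset.sum_empty]; exact Lp.coeFn_zero (E := ℂ) (p := 2) (μ := AddCircle.haarAddCircle)
  | insert a F2 hnotmem ih =>
    rw [Finset.sum_insert hnotmem]
    filter_upwards [Lp.coeFn_add (f a) (∑ n ∈ F2, f n), ih] with t h1 h2
    rw [h1]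
    simp only [Pi.add_apply, h2, Finset.sum_insert hnotmem]

lemma abs_int_ge {K : ℕ} (hK : 1 ≤ K) {m : ℤ} (hm : m ∉ Finset.Icc (-((K-1:ℕ):ℤ)) ((K-1:ℕ):ℤ)) :
    (K:ℝ) ≤ |(m:ℝ)| ∧ m ≠ 0 := by
  rw [Finset.mem_Icc, not_and_or, not_le, not_le] at hm
  have h1 : (K:ℤ) ≤ |m| := by
    rcases hm with h | h
    · have : m ≤ -(K:ℤ) := by omega
      calc (K:ℤ) ≤ -m := by omega
        _ ≤ |m| := by rw [← abs_neg]; exact le_abs_self _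
    · have : (K:ℤ) ≤ m := by omega
      exact this.trans (le_abs_self m)
  constructor
  · calc (K:ℝ) = ((K:ℤ):ℝ) := by push_cast; ring
      _ ≤ |(m:ℝ)| := by rw [← Int.cast_abs]; exact_mod_cast h1
  · intro h0; rw [h0] at h1; simp at h1; omega

lemma tail_bound {g : ℝ → ℝ} (hg : ContDiff ℝ ∞ g) (hper : Function.Periodic g (2*π))
    (s K : ℕ) (hK : 1 ≤ K) :
    ∫ x in Set.Ioc (0:ℝ) (2*π), (g x - SKr g K x)^2
      ≤ (((K:ℝ)^s)⁻¹)^2 * ∫ x in Set.Ioc (0:ℝ) (2*π), (iteratedDeriv s g x)^2 := by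
  classical
  have hgc : Continuous g := hg.continuous
  have hdc : Continuous (iteratedDeriv s g) :=
    hg.continuous_iteratedDeriv s (by exact_mod_cast le_top)
  set F := Finset.Icc (-((K-1:ℕ):ℤ)) ((K-1:ℕ):ℤ) with hF
  have hm := memLp_liftIoc hgc
  set fL := hm.toLp _ with hfL
  set resid := fL - ∑ n ∈ F, (cC g n) • fourierLp 2 n with hresid
  -- coefficients of fL
  have hcoeff : ∀ n : ℤ, fourierCoeff (fL : AddCircle (2*π) → ℂ) n = cC g n := by
    intro n
    refine integral_congr_ae ?_
    filter_upwards [hm.coeFn_toLp] with t ht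
    rw [ht]
  have hreprfL : ∀ n : ℤ, fourierBasis.repr fL n = cC g n := fun n => by
    rw [fourierBasis_repr]; exact hcoeff n
  -- coefficients of resid
  have hrepr : ∀ m : ℤ, fourierBasis.repr resid m = if m ∈ F then 0 else cC g m := by
    intro m
    have hbasis : ∀ n : ℤ, (fourierLp (T := 2*π) 2 n) = fourierBasis n := fun n =>
      (congrFun coe_fourierBasis n).symm
    have : fourierBasis.repr resid
        = fourierBasis.repr fL - ∑ n ∈ F, cC g n • lp.single 2 n 1 := by
      rw [hresid, map_sub, map_sum]
      congr 1
      refine Finset.sum_congr rfl fun n _ => ?_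
      rw [_root_.map_smul, hbasis n, HilbertBasis.repr_self]
    rw [this, lp.coeFn_sub, Pi.sub_apply, hreprfL]
    have hsum : (↑(∑ n ∈ F, cC g n • lp.single 2 n 1) : ℤ → ℂ) m
        = ∑ n ∈ F, (cC g n • lp.single 2 n 1 : lp (fun _ : ℤ => ℂ) 2) m := by
      rw [lp.coeFn_sum, Finset.sum_apply]
    rw [hsum]
    have hterm : ∀ n : ℤ, (cC g n • lp.single 2 n 1 : lp (fun _ : ℤ => ℂ) 2) m
        = if m = n then cC g n else 0 := by
      intro n
      rw [lp.coeFn_smul, Pi.smul_apply, lp.single_apply]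
      by_cases h : m = n
      · subst h; simp
      · simp [h]
    rw [Finset.sum_congr rfl fun n _ => hterm n, Finset.sum_ite_eq F m (fun n => cC g n)]
    by_cases hmF : m ∈ F
    · simp [hmF]
    · simp [hmF]
  -- a.e. representation of resid
  set residfun : AddCircle (2*π) → ℂ :=
    fun t => AddCircle.liftIoc (2*π) 0 (fun x => ((g x : ℝ) : ℂ)) t
      - ∑ n ∈ F, cC g n • fourier n t with hresidfun
  have h_ae : (↑↑resid : AddCircle (2*π) → ℂ) =ᵐ[AddCircle.haarAddCircle] residfun := by
    have h1 := Lp.coeFn_sub fL (∑ n ∈ F, (cC g n) • fourierLp 2 n)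
    have h2 := Lp_coeFn_sum F (fun n => (cC g n) • fourierLp (T := 2*π) 2 n)
    have h3 : ∀ n ∈ F, (↑↑((cC g n) • fourierLp (T := 2*π) 2 n) : AddCircle (2*π) → ℂ)
        =ᵐ[AddCircle.haarAddCircle] fun t => cC g n • fourier n t := by
      intro n _
      filter_upwards [Lp.coeFn_smul (cC g n) (fourierLp (T := 2*π) 2 n),
        coeFn_fourierLp (T := 2*π) 2 n] with t ht1 ht2
      rw [ht1, Pi.smul_apply, ht2]
    have h4 : (fun t => ∑ n ∈ F, ((cC g n) • fourierLp (T := 2*π) 2 n) t)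
        =ᵐ[AddCircle.haarAddCircle] fun t => ∑ n ∈ F, cC g n • fourier n t := by
      have hae : ∀ᵐ t ∂(AddCircle.haarAddCircle (T := 2*π)),
          ∀ n ∈ (F : Set ℤ), (↑↑((cC g n) • fourierLp (T := 2*π) 2 n) : AddCircle (2*π) → ℂ) t
            = cC g n • fourier n t := by
        rw [MeasureTheory.ae_ball_iff F.countable_toSet]
        intro n hn
        exact h3 n hn
      filter_upwards [hae] with t ht
      exact Finset.sum_congr rfl fun n hn => ht n (Finset.mem_coe.mpr hn)
    filter_upwards [h1, h2, h4, hm.coeFn_toLp] with t ht1 ht2 ht4 ht5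
    rw [ht1, Pi.sub_apply, ht2, ht5, ht4]
  -- Parseval for resid
  have hpars : ∑' m : ℤ, ‖fourierBasis.repr resid m‖^2
      = ∫ t : AddCircle (2*π), ‖residfun t‖^2 ∂AddCircle.haarAddCircle := by
    rw [show ∑' m : ℤ, ‖fourierBasis.repr resid m‖^2
        = ∑' m : ℤ, ‖fourierCoeff (resid : AddCircle (2*π) → ℂ) m‖^2 from
      tsum_congr fun m => by rw [fourierBasis_repr], tsum_sq_fourierCoeff resid]
    refine integral_congr_ae ?_
    filter_upwards [h_ae] with t ht
    rw [ht]
  -- identify the L² error integral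
  have herr : ∫ t : AddCircle (2*π), ‖residfun t‖^2 ∂AddCircle.haarAddCircle
      = (2*π)⁻¹ * ∫ x in Set.Ioc (0:ℝ) (2*π), (g x - SKr g K x)^2 := by
    rw [show ∫ t : AddCircle (2*π), ‖residfun t‖^2 ∂AddCircle.haarAddCircle
        = (2*π)⁻¹ * ∫ t : AddCircle (2*π), ‖residfun t‖^2 ∂volume from by
      rw [AddCircle.volume_eq_smul_haarAddCircle, integral_smul_measure,
        ENNReal.toReal_ofReal two_pi_pos.le, smul_eq_mul, ← mul_assoc,
        inv_mul_cancel₀ two_pi_pos.ne', one_mul]]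
    congr 1
    rw [← AddCircle.intervalIntegral_preimage (2*π) 0 (fun t => ‖residfun t‖^2),
      intervalIntegral.integral_of_le (by rw [zero_add]; exact two_pi_pos.le),
      show (0:ℝ) + 2*π = 2*π from zero_add _]
    refine setIntegral_congr_fun measurableSet_Ioc fun x hx => ?_
    have hval : residfun (x : AddCircle (2*π)) = ((g x - SKr g K x : ℝ) : ℂ) := by
      rw [hresidfun]
      simp only
      rw [AddCircle.liftIoc_coe_apply (by rwa [zero_add])]
      rw [show (∑ n ∈ F, cC g n • fourier n ((x : ℝ) : AddCircle (2*π)))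
          = ((SKr g K x : ℝ) : ℂ) from by
        rw [← SC_real hgc K x]
        exact Finset.sum_congr rfl fun n _ => by rw [smul_eq_mul]]
      push_cast
      ring
    rw [hval, Complex.norm_real, Real.norm_eq_abs, sq_abs]
  -- tail estimate
  have hsum_deriv := parseval hdc
  have htail : ∑' m : ℤ, ‖fourierBasis.repr resid m‖^2
      ≤ (((K:ℝ)^s)⁻¹)^2 * ∑' m : ℤ, ‖cC (iteratedDeriv s g) m‖^2 := by
    rw [← tsum_mul_left]
    refine Summable.tsum_le_tsum ?_ ?_ ?_
    · intro m
      rw [hrepr m]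
      by_cases hmF : m ∈ F
      · have hpos : (0:ℝ) ≤ (((K:ℝ)^s)⁻¹)^2 * ‖cC (iteratedDeriv s g) m‖^2 := by positivity
        simpa [hmF] using hpos
      · simp only [hmF, if_false]
        obtain ⟨habs, hm0⟩ := abs_int_ge hK hmF
        have hKpos : (0:ℝ) < (K:ℝ)^s := by positivity
        have h1 : ‖cC g m‖ = ‖cC (iteratedDeriv s g) m‖ / |(m:ℝ)|^s :=
          cC_iteratedDeriv hg hper hm0 s
        have h2 : ‖cC (iteratedDeriv s g) m‖ / |(m:ℝ)|^s
            ≤ ‖cC (iteratedDeriv s g) m‖ / (K:ℝ)^s := by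
          apply div_le_div_of_nonneg_left (norm_nonneg _) hKpos
          exact pow_le_pow_left₀ (by positivity) habs s
        calc ‖cC g m‖^2 ≤ (‖cC (iteratedDeriv s g) m‖ / (K:ℝ)^s)^2 := by
              rw [h1]; exact pow_le_pow_left₀ (by positivity) h2 2
          _ = (((K:ℝ)^s)⁻¹)^2 * ‖cC (iteratedDeriv s g) m‖^2 := by
              rw [div_pow]; ring
    · have hmem := (memℓp_gen_iff (p := (2:ENNReal)) (E := fun _ : ℤ => ℂ)
        (by norm_num)).mp (lp.memℓp (fourierBasis.repr resid))
      have heq : (fun m : ℤ => ‖fourierBasis.repr resid m‖ ^ ((2:ENNReal)).toReal)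
          = fun m : ℤ => ‖fourierBasis.repr resid m‖^2 := by
        funext m
        rw [show ((2:ENNReal).toReal) = ((2:ℕ):ℝ) by norm_num, Real.rpow_natCast]
      rwa [heq] at hmem
    · exact hsum_deriv.1.mul_left _
  -- put everything together
  have hineq : (2*π)⁻¹ * ∫ x in Set.Ioc (0:ℝ) (2*π), (g x - SKr g K x)^2
      ≤ (((K:ℝ)^s)⁻¹)^2 * ((2*π)⁻¹ * ∫ x in Set.Ioc (0:ℝ) (2*π), (iteratedDeriv s g x)^2) := by
    rw [← herr, ← hpars, ← hsum_deriv.2]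
    exact htail
  have h2π : (0:ℝ) < (2*π)⁻¹ := by positivity
  calc ∫ x in Set.Ioc (0:ℝ) (2*π), (g x - SKr g K x)^2
      = (2*π) * ((2*π)⁻¹ * ∫ x in Set.Ioc (0:ℝ) (2*π), (g x - SKr g K x)^2) := by
        field_simp
    _ ≤ (2*π) * ((((K:ℝ)^s)⁻¹)^2 * ((2*π)⁻¹ * ∫ x in Set.Ioc (0:ℝ) (2*π), (iteratedDeriv s g x)^2)) := by
        apply mul_le_mul_of_nonneg_left hineq two_pi_pos.le
    _ = (((K:ℝ)^s)⁻¹)^2 * ∫ x in Set.Ioc (0:ℝ) (2*π), (iteratedDeriv s g x)^2 := by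
        field_simp

lemma leibniz_bound (β : ℝ) {V : ℝ → ℝ} (hV : ContDiff ℝ ∞ V) (s : ℕ) :
    ∃ B : ℝ, 0 ≤ B ∧ ∀ φ : ℝ → ℝ, ContDiff ℝ ∞ φ →
      ∫ x in Set.Ioc (0:ℝ) (2*π),
          (iteratedDeriv s (fun q => φ q * Real.exp (-(β * V q)/2)) x)^2
        ≤ B * ∑ j ∈ Finset.range (s+1),
            ∫ x in Set.Ioc (0:ℝ) (2*π), (iteratedDeriv j φ x)^2 * Real.exp (-(β * V x)) := by
  set w : ℝ → ℝ := fun q => Real.exp (-(β * V q)/2) with hwdef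
  have hw : ContDiff ℝ ∞ w :=
    Real.contDiff_exp.comp (((contDiff_const.mul hV).neg).div_const 2)
  have hwpos : ∀ x, 0 < w x := fun x => Real.exp_pos _
  -- bounds on derivatives of the weight
  have hbound : ∀ m : ℕ, ∃ C : ℝ, 0 ≤ C ∧
      ∀ x ∈ Set.Icc (0:ℝ) (2*π), |iteratedDeriv m w x| ≤ C * w x := by
    intro m
    have hcont : Continuous fun x => iteratedDeriv m w x * Real.exp ((β * V x)/2) :=
      (hw.continuous_iteratedDeriv m (by exact_mod_cast le_top)).mul
        (Real.continuous_exp.comp ((continuous_const.mul hV.continuous).div_const 2))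
    obtain ⟨C, hC⟩ := (isCompact_Icc (a := (0:ℝ)) (b := 2*π)).exists_bound_of_continuousOn
      hcont.continuousOn
    refine ⟨max C 0, le_max_right _ _, fun x hx => ?_⟩
    have hkey : iteratedDeriv m w x
        = (iteratedDeriv m w x * Real.exp ((β * V x)/2)) * w x := by
      rw [mul_assoc, hwdef]
      simp only
      rw [← Real.exp_add, show (β * V x)/2 + -(β * V x)/2 = 0 by ring, Real.exp_zero, mul_one]
    rw [hkey, abs_mul, abs_of_pos (hwpos x)]
    apply mul_le_mul_of_nonneg_right _ (hwpos x).le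
    calc |iteratedDeriv m w x * Real.exp ((β * V x)/2)|
        = ‖iteratedDeriv m w x * Real.exp ((β * V x)/2)‖ := (Real.norm_eq_abs _).symm
      _ ≤ C := hC x hx
      _ ≤ max C 0 := le_max_left _ _
  choose A hA0 hA using hbound
  refine ⟨∑ j ∈ Finset.range (s+1), ((s.choose j : ℝ) * A (s - j))^2, by positivity,
    fun φ hφ => ?_⟩
  set ψ : ℝ → ℝ := fun q => φ q * w q with hψdef
  have hψ : ContDiff ℝ ∞ ψ := hφ.mul hw
  -- pointwise bound
  have hptw : ∀ x ∈ Set.Icc (0:ℝ) (2*π),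
      (iteratedDeriv s ψ x)^2
        ≤ (∑ j ∈ Finset.range (s+1), ((s.choose j : ℝ) * A (s - j))^2)
          * ∑ j ∈ Finset.range (s+1), (iteratedDeriv j φ x)^2 * Real.exp (-(β * V x)) := by
    intro x hx
    have hstep1 : |iteratedDeriv s ψ x|
        ≤ ∑ j ∈ Finset.range (s+1),
            (s.choose j : ℝ) * |iteratedDeriv j φ x| * |iteratedDeriv (s-j) w x| := by
      have h1 : |iteratedDeriv s ψ x| = ‖iteratedFDeriv ℝ s ψ x‖ := by
        rw [norm_iteratedFDeriv_eq_norm_iteratedDeriv, Real.norm_eq_abs]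
      rw [h1]
      have h2 := norm_iteratedFDeriv_mul_le (𝕜 := ℝ) hφ hw x (n := s) (by exact_mod_cast le_top)
      refine h2.trans (le_of_eq (Finset.sum_congr rfl fun j _ => ?_))
      rw [norm_iteratedFDeriv_eq_norm_iteratedDeriv, norm_iteratedFDeriv_eq_norm_iteratedDeriv,
        Real.norm_eq_abs, Real.norm_eq_abs]
    have hstep2 : |iteratedDeriv s ψ x|
        ≤ ∑ j ∈ Finset.range (s+1),
            ((s.choose j : ℝ) * A (s - j)) * (|iteratedDeriv j φ x| * w x) := by
      refine hstep1.trans (Finset.sum_le_sum fun j _ => ?_)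
      have := hA (s - j) x hx
      calc (s.choose j : ℝ) * |iteratedDeriv j φ x| * |iteratedDeriv (s-j) w x|
          ≤ (s.choose j : ℝ) * |iteratedDeriv j φ x| * (A (s-j) * w x) := by
            apply mul_le_mul_of_nonneg_left this (by positivity)
        _ = ((s.choose j : ℝ) * A (s - j)) * (|iteratedDeriv j φ x| * w x) := by ring
    have hsq : (iteratedDeriv s ψ x)^2 ≤ (∑ j ∈ Finset.range (s+1),
        ((s.choose j : ℝ) * A (s - j)) * (|iteratedDeriv j φ x| * w x))^2 := by
      rw [← sq_abs]
      apply pow_le_pow_left₀ (abs_nonneg _) hstep2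
    refine hsq.trans ?_
    refine (Finset.sum_mul_sq_le_sq_mul_sq _ _ _).trans (le_of_eq ?_)
    congr 1
    refine Finset.sum_congr rfl fun j _ => ?_
    rw [mul_pow, sq_abs, hwdef]
    simp only
    rw [show Real.exp (-(β * V x)/2) ^ 2 = Real.exp (-(β * V x)) from by
      rw [sq, ← Real.exp_add]; congr 1; ring]
  -- integrability
  have hcψ : Continuous fun x => (iteratedDeriv s ψ x)^2 :=
    (hψ.continuous_iteratedDeriv s (by exact_mod_cast le_top)).pow 2
  have hcφ : ∀ j, Continuous fun x => (iteratedDeriv j φ x)^2 * Real.exp (-(β * V x)) :=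
    fun j => ((hφ.continuous_iteratedDeriv j (by exact_mod_cast le_top)).pow 2).mul
      (Real.continuous_exp.comp (continuous_const.mul hV.continuous).neg)
  have hint : ∀ j, IntegrableOn (fun x => (iteratedDeriv j φ x)^2 * Real.exp (-(β * V x)))
      (Set.Ioc (0:ℝ) (2*π)) volume := fun j => (hcφ j).integrableOn_Ioc
  calc ∫ x in Set.Ioc (0:ℝ) (2*π), (iteratedDeriv s ψ x)^2
      ≤ ∫ x in Set.Ioc (0:ℝ) (2*π),
          (∑ j ∈ Finset.range (s+1), ((s.choose j : ℝ) * A (s - j))^2)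
            * ∑ j ∈ Finset.range (s+1), (iteratedDeriv j φ x)^2 * Real.exp (-(β * V x)) := by
        refine setIntegral_mono_on hcψ.integrableOn_Ioc ?_ measurableSet_Ioc
          (fun x hx => hptw x (Set.Ioc_subset_Icc_self hx))
        exact ((continuous_const.mul (continuous_finset_sum _ fun j _ => hcφ j))).integrableOn_Ioc
    _ = (∑ j ∈ Finset.range (s+1), ((s.choose j : ℝ) * A (s - j))^2)
          * ∑ j ∈ Finset.range (s+1),
              ∫ x in Set.Ioc (0:ℝ) (2*π), (iteratedDeriv j φ x)^2 * Real.exp (-(β * V x)) := by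
        rw [MeasureTheory.integral_const_mul]
        congr 1
        rw [integral_finset_sum _ fun j _ => hint j]

lemma proj_eq (β : ℝ) {V : ℝ → ℝ} (hVc : Continuous V)
    (φ : ℝ → ℝ) (K : ℕ) (hK : 1 ≤ K) (q : ℝ) :
    projq β V K φ q = Real.exp (β * V q / 2)
      * SKr (fun x => φ x * Real.exp (-(β * V x)/2)) K q := by
  have hZ : 0 < Znu β V := Znu_pos hVc
  set Z := Znu β V with hZdef
  set ψ : ℝ → ℝ := fun x => φ x * Real.exp (-(β * V x)/2) with hψdef
  have hcoe : ∀ (c : ℝ) (trig : ℝ → ℝ),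
      (∫ q', φ q' * (c * trig q' * Real.exp (β * V q' / 2)) ∂(nuMeas β V))
        = Z⁻¹ * (c * ∫ x in Set.Ioc (0:ℝ) (2*π), ψ x * trig x) := by
    intro c trig
    rw [integral_nu hVc]
    congr 1
    rw [← MeasureTheory.integral_const_mul]
    refine setIntegral_congr_fun measurableSet_Ioc fun x _ => ?_
    show φ x * (c * trig x * Real.exp (β * V x / 2)) * Real.exp (-(β * V x))
        = c * (ψ x * trig x)
    rw [show φ x * (c * trig x * Real.exp (β * V x/2)) * Real.exp (-(β * V x))
        = c * ((φ x * trig x) * (Real.exp (β * V x/2) * Real.exp (-(β * V x)))) from by ring,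
      ← Real.exp_add, show β * V x/2 + -(β * V x) = -(β * V x)/2 from by ring]
    simp only [hψdef]
    ring
  have hG0 : ∀ x, Gfun β V 0 x = Real.sqrt (Z/(2*π)) * Real.exp (β * V x / 2) := by
    intro x; rw [Gfun, if_pos rfl]
  have hGodd : ∀ (k : ℕ) (x : ℝ), Gfun β V (2*k+1) x
      = Real.sqrt (Z/π) * Real.sin (((k:ℝ)+1) * x) * Real.exp (β * V x / 2) := by
    intro k x
    rw [Gfun, if_neg (by omega), if_neg (by omega),
      show (2*k+1+1)/2 = k+1 from by omega, ← hZdef]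
    push_cast
    ring_nf
  have hGeven : ∀ (k : ℕ) (x : ℝ), Gfun β V (2*k+2) x
      = Real.sqrt (Z/π) * Real.cos (((k:ℝ)+1) * x) * Real.exp (β * V x / 2) := by
    intro k x
    rw [Gfun, if_neg (by omega), if_pos (by omega),
      show (2*k+2)/2 = k+1 from by omega, ← hZdef]
    push_cast
    ring_nf
  have hsqrt2π : Real.sqrt (Z/(2*π)) * Real.sqrt (Z/(2*π)) = Z/(2*π) :=
    Real.mul_self_sqrt (by positivity)
  have hsqrtπ : Real.sqrt (Z/π) * Real.sqrt (Z/π) = Z/π :=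
    Real.mul_self_sqrt (by positivity)
  rw [projq, show 2*K - 1 = 2*(K-1)+1 from by omega,
    sum_range_odd (fun j => (∫ q', φ q' * Gfun β V j q' ∂(nuMeas β V)) * Gfun β V j q) (K-1)]
  have ht0 : (∫ q', φ q' * Gfun β V 0 q' ∂(nuMeas β V)) * Gfun β V 0 q
      = Real.exp (β * V q / 2) * ((2*π)⁻¹ * ∫ x in Set.Ioc (0:ℝ) (2*π), ψ x) := by
    rw [show (fun q' => φ q' * Gfun β V 0 q') = fun q' =>
        φ q' * (Real.sqrt (Z/(2*π)) * (1:ℝ) * Real.exp (β * V q' / 2)) from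
      funext fun x => by rw [hG0 x]; ring]
    rw [hcoe (Real.sqrt (Z/(2*π))) (fun _ => (1:ℝ)), hG0 q]
    rw [show (fun x => ψ x * (1:ℝ)) = ψ from funext fun x => mul_one _]
    rw [show Z⁻¹ * (Real.sqrt (Z/(2*π)) * (∫ x in Set.Ioc (0:ℝ) (2*π), ψ x))
          * (Real.sqrt (Z/(2*π)) * Real.exp (β * V q / 2))
        = (Z⁻¹ * (Real.sqrt (Z/(2*π)) * Real.sqrt (Z/(2*π))))
          * (∫ x in Set.Ioc (0:ℝ) (2*π), ψ x) * Real.exp (β * V q / 2) from by ring,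
      hsqrt2π, show Z⁻¹ * (Z/(2*π)) = (2*π)⁻¹ from by
        field_simp]
    ring
  have htpair : ∀ k : ℕ,
      (∫ q', φ q' * Gfun β V (2*k+1) q' ∂(nuMeas β V)) * Gfun β V (2*k+1) q
      + (∫ q', φ q' * Gfun β V (2*k+2) q' ∂(nuMeas β V)) * Gfun β V (2*k+2) q
      = Real.exp (β * V q / 2) *
          (π⁻¹ * Icos ψ ((k:ℝ)+1) * Real.cos (((k:ℝ)+1)*q)
            + π⁻¹ * Isin ψ ((k:ℝ)+1) * Real.sin (((k:ℝ)+1)*q)) := by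
    intro k
    rw [show (fun q' => φ q' * Gfun β V (2*k+1) q') = fun q' =>
        φ q' * (Real.sqrt (Z/π) * Real.sin (((k:ℝ)+1) * q') * Real.exp (β * V q' / 2)) from
      funext fun x => by rw [hGodd k x],
      show (fun q' => φ q' * Gfun β V (2*k+2) q') = fun q' =>
        φ q' * (Real.sqrt (Z/π) * Real.cos (((k:ℝ)+1) * q') * Real.exp (β * V q' / 2)) from
      funext fun x => by rw [hGeven k x],
      hcoe (Real.sqrt (Z/π)) (fun x => Real.sin (((k:ℝ)+1) * x)),
      hcoe (Real.sqrt (Z/π)) (fun x => Real.cos (((k:ℝ)+1) * x)),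
      hGodd k q, hGeven k q]
    have hIc : (∫ x in Set.Ioc (0:ℝ) (2*π), ψ x * Real.cos (((k:ℝ)+1) * x))
        = Icos ψ ((k:ℝ)+1) := by rw [Icos]
    have hIs : (∫ x in Set.Ioc (0:ℝ) (2*π), ψ x * Real.sin (((k:ℝ)+1) * x))
        = Isin ψ ((k:ℝ)+1) := by rw [Isin]
    rw [hIc, hIs]
    rw [show Z⁻¹ * (Real.sqrt (Z/π) * Isin ψ ((k:ℝ)+1))
          * (Real.sqrt (Z/π) * Real.sin (((k:ℝ)+1) * q) * Real.exp (β * V q / 2))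
        + Z⁻¹ * (Real.sqrt (Z/π) * Icos ψ ((k:ℝ)+1))
          * (Real.sqrt (Z/π) * Real.cos (((k:ℝ)+1) * q) * Real.exp (β * V q / 2))
        = (Z⁻¹ * (Real.sqrt (Z/π) * Real.sqrt (Z/π)))
            * (Isin ψ ((k:ℝ)+1) * Real.sin (((k:ℝ)+1) * q)
              + Icos ψ ((k:ℝ)+1) * Real.cos (((k:ℝ)+1) * q)) * Real.exp (β * V q / 2)
        from by ring, hsqrtπ]
    have hZπ : Z⁻¹ * (Z/π) = π⁻¹ := by
      field_simp
    rw [hZπ]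
    ring
  rw [ht0, Finset.sum_congr rfl (fun k _ => htpair k), ← Finset.mul_sum, SKr]
  ring

end WFA

/-- Lemma 4.1: weighted Fourier approximation. For every `s` there is `M_s` such that
`‖φ - Π_K^q φ‖_{L²(ν)} ≤ (M_s/K^s) ‖φ‖_{H^s(ν)}` for all smooth `φ` and all `K ≥ 1`. -/
theorem weighted_fourier_approximation (β : ℝ) (hβ : 0 < β)
    (V : ℝ → ℝ) (hV : ContDiff ℝ ∞ V) (hVper : Function.Periodic V (2*π)) (s : ℕ) :
    ∃ Ms : ℝ, 0 ≤ Ms ∧ ∀ φ : ℝ → ℝ, ContDiff ℝ ∞ φ → Function.Periodic φ (2*π) →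
      ∀ K : ℕ, 1 ≤ K →
        Real.sqrt (∫ q, (φ q - projq β V K φ q)^2 ∂(nuMeas β V))
          ≤ Ms / (K:ℝ)^s *
            Real.sqrt (∑ j ∈ Finset.range (s+1),
              ∫ q, (iteratedDeriv j φ q)^2 ∂(nuMeas β V)) := by
  classical
  obtain ⟨B, hB0, hB⟩ := WFA.leibniz_bound β hV s
  refine ⟨Real.sqrt B, Real.sqrt_nonneg B, fun φ hφ hφper K hK => ?_⟩
  have hVc : Continuous V := hV.continuous
  have hZ : 0 < Znu β V := WFA.Znu_pos hVc
  set Z := Znu β V with hZdef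
  set ψ : ℝ → ℝ := fun x => φ x * Real.exp (-(β * V x)/2) with hψdef
  have hw : ContDiff ℝ ∞ (fun q => Real.exp (-(β * V q)/2)) :=
    Real.contDiff_exp.comp (((contDiff_const.mul hV).neg).div_const 2)
  have hψ : ContDiff ℝ ∞ ψ := hφ.mul hw
  have hψper : Function.Periodic ψ (2*π) := fun x => by
    simp only [hψdef, hφper x, hVper x]
  -- Step 1: pointwise error formula
  have hptw : ∀ q : ℝ, φ q - projq β V K φ q
      = Real.exp (β * V q / 2) * (ψ q - WFA.SKr ψ K q) := by
    intro q
    rw [WFA.proj_eq β hVc φ K hK q, mul_sub]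
    congr 1
    rw [hψdef]
    simp only
    rw [show Real.exp (β * V q / 2) * (φ q * Real.exp (-(β * V q)/2))
        = φ q * (Real.exp (β * V q / 2) * Real.exp (-(β * V q)/2)) from by ring,
      ← Real.exp_add, show β * V q / 2 + -(β * V q)/2 = 0 from by ring, Real.exp_zero, mul_one]
  -- Step 2: reduce the ν-integral to a Lebesgue integral
  have hstep2 : ∫ q, (φ q - projq β V K φ q)^2 ∂(nuMeas β V)
      = Z⁻¹ * ∫ x in Set.Ioc (0:ℝ) (2*π), (ψ x - WFA.SKr ψ K x)^2 := by
    rw [WFA.integral_nu hVc]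
    congr 1
    refine setIntegral_congr_fun measurableSet_Ioc fun x _ => ?_
    rw [hptw x]
    rw [show (Real.exp (β * V x / 2) * (ψ x - WFA.SKr ψ K x))^2 * Real.exp (-(β * V x))
        = (ψ x - WFA.SKr ψ K x)^2
            * (Real.exp (β * V x / 2) * Real.exp (β * V x / 2) * Real.exp (-(β * V x))) from by
      ring, ← Real.exp_add, ← Real.exp_add,
      show β * V x / 2 + β * V x / 2 + -(β * V x) = 0 from by ring, Real.exp_zero, mul_one]
  -- Step 3: Fourier tail bound
  have hstep3 := WFA.tail_bound hψ hψper s K hK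
  -- Step 4: Leibniz bound
  have hstep4 := hB φ hφ
  -- Step 5: each weighted integral equals Z times the ν-integral
  have hstep5 : ∀ j : ℕ,
      ∫ x in Set.Ioc (0:ℝ) (2*π), (iteratedDeriv j φ x)^2 * Real.exp (-(β * V x))
        = Z * ∫ q, (iteratedDeriv j φ q)^2 ∂(nuMeas β V) := by
    intro j
    rw [WFA.integral_nu hVc, ← mul_assoc, mul_inv_cancel₀ hZ.ne', one_mul]
  set S := ∑ j ∈ Finset.range (s+1), ∫ q, (iteratedDeriv j φ q)^2 ∂(nuMeas β V) with hSdef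
  have hS0 : 0 ≤ S := Finset.sum_nonneg fun j _ =>
    integral_nonneg fun q => sq_nonneg _
  have hKs : (0:ℝ) < (K:ℝ)^s := by
    have : (0:ℝ) < (K:ℝ) := by exact_mod_cast Nat.lt_of_lt_of_le Nat.zero_lt_one hK
    positivity
  -- combine
  have hmain : ∫ q, (φ q - projq β V K φ q)^2 ∂(nuMeas β V)
      ≤ (Real.sqrt B / (K:ℝ)^s)^2 * S := by
    rw [hstep2]
    have h1 : Z⁻¹ * ∫ x in Set.Ioc (0:ℝ) (2*π), (ψ x - WFA.SKr ψ K x)^2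
        ≤ Z⁻¹ * ((((K:ℝ)^s)⁻¹)^2
            * ∫ x in Set.Ioc (0:ℝ) (2*π), (iteratedDeriv s ψ x)^2) :=
      mul_le_mul_of_nonneg_left hstep3 (inv_nonneg.mpr hZ.le)
    refine h1.trans ?_
    have h2 : ∫ x in Set.Ioc (0:ℝ) (2*π), (iteratedDeriv s ψ x)^2
        ≤ B * (Z * S) := by
      refine hstep4.trans (le_of_eq ?_)
      congr 1
      rw [hSdef, Finset.mul_sum]
      exact Finset.sum_congr rfl fun j _ => hstep5 j
    calc Z⁻¹ * ((((K:ℝ)^s)⁻¹)^2 * ∫ x in Set.Ioc (0:ℝ) (2*π), (iteratedDeriv s ψ x)^2)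
        ≤ Z⁻¹ * ((((K:ℝ)^s)⁻¹)^2 * (B * (Z * S))) := by
          apply mul_le_mul_of_nonneg_left _ (inv_nonneg.mpr hZ.le)
          exact mul_le_mul_of_nonneg_left h2 (by positivity)
      _ = (Real.sqrt B / (K:ℝ)^s)^2 * S := by
          rw [div_pow, Real.sq_sqrt hB0]
          field_simp
  calc Real.sqrt (∫ q, (φ q - projq β V K φ q)^2 ∂(nuMeas β V))
      ≤ Real.sqrt ((Real.sqrt B / (K:ℝ)^s)^2 * S) := Real.sqrt_le_sqrt hmain
    _ = Real.sqrt B / (K:ℝ)^s * Real.sqrt S := by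
        rw [Real.sqrt_mul (sq_nonneg _) S, Real.sqrt_sq (by positivity)]
end

section
/- (Spectral lower bound for T(1+T)⁻¹, core of inequality (2.13).) Let H be a real Hilbert space, T a bounded self-adjoint operator on H with ⟨Tφ, φ⟩ ≥ 0 for all φ ∈ H, and P an orthogonal projection on H such that T = P∘T∘P. Assume c ≥ 0 satisfies ⟨Tφ, φ⟩ ≥ c‖Pφ‖² for all φ ∈ H. Then 1 + T is invertible and for all φ ∈ H, ⟨T(1+T)⁻¹φ, φ⟩ ≥ (1 − (1+c)⁻¹)‖Pφ‖². -/
open scoped RealInnerProductSpace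

/-- Spectral lower bound for `T(1+T)⁻¹` (core of inequality (2.13)): if `T` is a nonnegative
bounded self-adjoint operator with `T = PTP` for an orthogonal projection `P`, and
`⟨Tφ,φ⟩ ≥ c‖Pφ‖²`, then `1+T` is invertible and `⟨T(1+T)⁻¹φ, φ⟩ ≥ (1-(1+c)⁻¹)‖Pφ‖²`. -/
theorem spectral_lower_bound
    {H : Type*} [NormedAddCommGroup H] [InnerProductSpace ℝ H] [CompleteSpace H]
    (T P : H →L[ℝ] H)
    (hTsa : ∀ x y : H, ⟪T x, y⟫ = ⟪x, T y⟫) (hTnonneg : ∀ φ : H, 0 ≤ ⟪T φ, φ⟫)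
    (hPidem : P ∘L P = P) (hPsa : ∀ x y : H, ⟪P x, y⟫ = ⟪x, P y⟫)
    (hPTP : T = P ∘L T ∘L P)
    (c : ℝ) (hc : 0 ≤ c) (hcoer : ∀ φ : H, c * ‖P φ‖^2 ≤ ⟪T φ, φ⟫) :
    IsUnit (1 + T) ∧
      ∀ φ : H, (1 - (1 + c)⁻¹) * ‖P φ‖^2 ≤ ⟪T (Ring.inverse (1 + T) φ), φ⟫ := by
  set S : H →L[ℝ] H := 1 + T with hS
  -- coercivity of S = 1 + T
  have hScoer : IsCoercive ((innerSL ℝ).comp S) := by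
    refine ⟨1, one_pos, fun u => ?_⟩
    have h1 : ((innerSL ℝ).comp S) u u = ⟪u, u⟫ + ⟪T u, u⟫ := by
      simp [hS, inner_add_left]
    have := hTnonneg u
    rw [h1, real_inner_self_eq_norm_mul_norm]
    linarith
  -- the Lax-Milgram equivalence coincides with S
  have hSeq : ∀ v, hScoer.continuousLinearEquivOfBilin v = S v := by
    intro v
    apply ext_inner_right ℝ
    intro w
    rw [hScoer.continuousLinearEquivOfBilin_apply v w]
    simp
  have hSeq' : (hScoer.continuousLinearEquivOfBilin : H →L[ℝ] H) = S := by
    ext v; exact hSeq v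
  have hUnit : IsUnit S := by
    refine ⟨hScoer.continuousLinearEquivOfBilin.toUnit, ?_⟩
    exact hSeq'
  refine ⟨hUnit, fun φ => ?_⟩
  set ψ : H := Ring.inverse S φ with hψ
  have hSψ : S ψ = φ := by
    have := Ring.mul_inverse_cancel S hUnit
    calc S ψ = (S * Ring.inverse S) φ := rfl
    _ = φ := by rw [this]; rfl
  have hφ : ψ + T ψ = φ := by
    have : S ψ = ψ + T ψ := by simp [hS]
    rw [← this, hSψ]
  -- PT = T and TP = T
  have hPT : ∀ x, P (T x) = T x := by
    intro x
    have h1 : P ∘L T = T := by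
      rw [hPTP]
      calc P ∘L (P ∘L T ∘L P) = (P ∘L P) ∘L (T ∘L P) := by
            simp [ContinuousLinearMap.comp_assoc]
      _ = P ∘L T ∘L P := by rw [hPidem]
    exact congrFun (congrArg DFunLike.coe h1) x
  have hTP : ∀ x, T (P x) = T x := by
    intro x
    have h1 : T ∘L P = T := by
      rw [hPTP]
      calc (P ∘L T ∘L P) ∘L P = P ∘L T ∘L (P ∘L P) := by
            simp [ContinuousLinearMap.comp_assoc]
      _ = P ∘L T ∘L P := by rw [hPidem]
    exact congrFun (congrArg DFunLike.coe h1) x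
  set a : ℝ := ⟪T ψ, ψ⟫ with ha
  set b : ℝ := ‖T ψ‖^2 with hb
  set p : ℝ := ‖P ψ‖^2 with hp
  -- inner products
  have hinnerPT : ⟪P ψ, T ψ⟫ = a := by
    rw [hPsa, hPT, ha, real_inner_comm]
  have hRHS : ⟪T ψ, φ⟫ = a + b := by
    rw [← hφ, inner_add_right, ha, hb, real_inner_self_eq_norm_sq]
  have hPφ : P φ = P ψ + T ψ := by
    rw [← hφ]; rw [map_add, hPT]
  have hnormPφ : ‖P φ‖^2 = p + 2*a + b := by
    rw [hPφ, norm_add_sq_real, hinnerPT]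
  have hap : c * p ≤ a := hcoer ψ
  have ha0 : 0 ≤ a := hTnonneg ψ
  have hb0 : 0 ≤ b := sq_nonneg _
  have hp0 : 0 ≤ p := sq_nonneg _
  have hCS : a^2 ≤ b * p := by
    have h1 : a = ⟪T ψ, P ψ⟫ := by
      rw [real_inner_comm, hinnerPT]
    have h2 := abs_real_inner_le_norm (T ψ) (P ψ)
    have h3 : |a| ≤ ‖T ψ‖ * ‖P ψ‖ := by rw [h1]; exact h2
    nlinarith [abs_nonneg a, le_abs_self a, neg_abs_le a, norm_nonneg (T ψ), norm_nonneg (P ψ)]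
  have hc1 : (0:ℝ) < 1 + c := by linarith
  rw [hnormPφ, hRHS]
  clear_value a b p
  clear hinnerPT hRHS hPφ hnormPφ hSψ hφ hSeq hSeq' hScoer
  rcases eq_or_lt_of_le hp0 with hp0' | hp0'
  · -- p = 0 : then P ψ = 0, so T ψ = 0
    have hPψ : P ψ = 0 := by
      have : ‖P ψ‖ = 0 := by
        nlinarith [norm_nonneg (P ψ)]
      exact norm_eq_zero.mp this
    have hTψ : T ψ = 0 := by rw [← hTP, hPψ, map_zero]
    have ha' : a = 0 := by rw [ha, hTψ, inner_zero_left]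
    have hb' : b = 0 := by rw [hb, hTψ, norm_zero]; ring
    rw [ha', hb', ← hp0']
    norm_num
  · -- p > 0
    have key0 : 0 ≤ (a - c*p) * (a + p) :=
      mul_nonneg (by linarith) (by linarith)
    have key : c*(p+2*a+b) ≤ (1+c)*(a+b) := by
      nlinarith [key0, hCS, hp0']
    have h2 : (1 - (1+c)⁻¹) = c/(1+c) := by field_simp; ring
    rw [h2, div_mul_eq_mul_div, div_le_iff₀ hc1]
    linarith [key]
end

section
/- (Abstract Schur-complement bound, core of Lemma B.2.) Let H be a real Hilbert space, A a bounded self-adjoint operator on H with ⟨Aφ, φ⟩ ≥ ‖φ‖² for all φ ∈ H (in particular A is invertible), and P an orthogonal projection on H. Let α > 0 and b ≥ 0 be such that ⟨A(Pφ), Pφ⟩ ≥ α‖Pφ‖² for all φ ∈ H, ‖P∘A∘(1−P)‖ ≤ b, and α > b². Then for every φ ∈ H, 0 ≤ ⟨A⁻¹(Pφ), Pφ⟩ ≤ (α − b²)⁻¹ ‖Pφ‖². -/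
open scoped RealInnerProductSpace

set_option maxHeartbeats 1000000 in
private lemma schur_aux
    {H : Type*} [NormedAddCommGroup H] [InnerProductSpace ℝ H]
    (A P : H →L[ℝ] H)
    (hAsa : ∀ x y : H, ⟪A x, y⟫ = ⟪x, A y⟫) (hAcoer : ∀ φ : H, ‖φ‖^2 ≤ ⟪A φ, φ⟫)
    (hPidem : P ∘L P = P) (hPsa : ∀ x y : H, ⟪P x, y⟫ = ⟪x, P y⟫)
    (α b : ℝ) (hb : 0 ≤ b)
    (hAP : ∀ φ : H, α * ‖P φ‖^2 ≤ ⟪A (P φ), P φ⟫)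
    (hoff : ‖P ∘L A ∘L (1 - P)‖ ≤ b)
    (hαb : b^2 < α)
    (u ψ : H) (hPu : P u = u) (hAψ : A ψ = u) :
    0 ≤ ⟪ψ, u⟫ ∧ ⟪ψ, u⟫ ≤ (α - b^2)⁻¹ * ‖u‖^2 := by
  have hnn : 0 ≤ ⟪ψ, u⟫ := by
    have h := hAcoer ψ
    rw [hAψ, real_inner_comm] at h
    exact (sq_nonneg ‖ψ‖).trans h
  obtain ⟨p, hp⟩ : ∃ p, P ψ = p := ⟨P ψ, rfl⟩
  obtain ⟨q, hqdef⟩ : ∃ q, ψ - p = q := ⟨ψ - p, rfl⟩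
  have hPp : P p = p := by
    have := congrArg (fun T : H →L[ℝ] H => T ψ) hPidem
    simpa [hp] using this
  have hPq : P q = 0 := by
    rw [← hqdef, map_sub, hp, hPp, sub_self]
  have hψpq : ψ = p + q := by rw [← hqdef]; abel
  -- bound on ‖P (A q)‖
  have hPAq : ‖P (A q)‖ ≤ b * ‖q‖ := by
    have h3 : (1 - P) q = q := by
      simp [ContinuousLinearMap.sub_apply, hPq]
    have h4 : (P ∘L A ∘L (1 - P)) q = P (A q) := by
      rw [ContinuousLinearMap.comp_apply, ContinuousLinearMap.comp_apply, h3]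
    calc ‖P (A q)‖ = ‖(P ∘L A ∘L (1 - P)) q‖ := by rw [h4]
      _ ≤ ‖P ∘L A ∘L (1 - P)‖ * ‖q‖ := (P ∘L A ∘L (1 - P)).le_opNorm q
      _ ≤ b * ‖q‖ := by gcongr
  -- key cross term estimate
  have hcross : |⟪p, A q⟫| ≤ b * (‖p‖ * ‖q‖) := by
    have h1 : ⟪p, A q⟫ = ⟪p, P (A q)⟫ := by
      have h2 : ⟪P p, A q⟫ = ⟪p, P (A q)⟫ := hPsa p (A q)
      rw [← h2, hPp]
    rw [h1]
    calc |⟪p, P (A q)⟫| ≤ ‖p‖ * ‖P (A q)‖ := abs_real_inner_le_norm _ _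
      _ ≤ ‖p‖ * (b * ‖q‖) := mul_le_mul_of_nonneg_left hPAq (norm_nonneg _)
      _ = b * (‖p‖ * ‖q‖) := by ring
  -- ‖q‖ ≤ b ‖p‖
  have hq : ‖q‖ ≤ b * ‖p‖ := by
    have horth : ⟪A ψ, q⟫ = 0 := by
      rw [hAψ, ← hPu, hPsa, hPq, inner_zero_right]
    have hsplit : ⟪A p, q⟫ + ⟪A q, q⟫ = 0 := by
      rw [← inner_add_left, ← map_add, ← hψpq, horth]
    have hAq : ‖q‖^2 ≤ ⟪A q, q⟫ := hAcoer q
    have hApq : ⟪A p, q⟫ = ⟪p, A q⟫ := hAsa p q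
    have hsq : ‖q‖^2 ≤ b * (‖p‖ * ‖q‖) := by
      have habs := abs_le.mp hcross
      nlinarith [hsplit, hAq, hApq, habs.1, habs.2]
    rcases eq_or_lt_of_le (norm_nonneg q) with h0 | h0
    · rw [← h0]; positivity
    · nlinarith
  -- main estimate: (α - b²) ‖p‖² ≤ ⟪p, u⟫
  have hpu : (α - b^2) * ‖p‖^2 ≤ ⟪p, u⟫ := by
    have h1 : ⟪p, u⟫ = ⟪p, A p⟫ + ⟪p, A q⟫ := by
      rw [← hAψ]
      conv_lhs => rw [hψpq]
      rw [map_add, inner_add_right]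
    have h2 : α * ‖p‖^2 ≤ ⟪p, A p⟫ := by
      have h := hAP ψ
      rw [hp] at h
      rwa [real_inner_comm]
    have h3 := (abs_le.mp hcross).1
    nlinarith [norm_nonneg p, norm_nonneg q,
      mul_le_mul_of_nonneg_left hq (mul_nonneg hb (norm_nonneg p))]
  have hψu : ⟪ψ, u⟫ = ⟪p, u⟫ := by
    rw [← hp, hPsa ψ u, hPu]
  have hCS : ⟪p, u⟫ ≤ ‖p‖ * ‖u‖ := real_inner_le_norm p u
  have hc : (0:ℝ) < α - b^2 := by linarith
  refine ⟨hnn, ?_⟩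
  rw [hψu, inv_mul_eq_div, le_div_iff₀ hc]
  nlinarith [mul_le_mul_of_nonneg_left hCS hc.le, mul_le_mul_of_nonneg_left hpu hc.le,
    sq_nonneg (‖u‖ - (α - b^2) * ‖p‖)]

set_option maxHeartbeats 1000000 in
/-- Abstract Schur-complement bound (core of Lemma B.2): if `A` is a bounded self-adjoint
operator with `⟨Aφ,φ⟩ ≥ ‖φ‖²` (hence invertible), `P` an orthogonal projection,
`⟨A(Pφ),Pφ⟩ ≥ α‖Pφ‖²`, `‖P∘A∘(1-P)‖ ≤ b` and `α > b²`, then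
`0 ≤ ⟨A⁻¹(Pφ), Pφ⟩ ≤ (α-b²)⁻¹‖Pφ‖²`. -/
theorem schur_complement_bound
    {H : Type*} [NormedAddCommGroup H] [InnerProductSpace ℝ H] [CompleteSpace H]
    (A P : H →L[ℝ] H)
    (hAsa : ∀ x y : H, ⟪A x, y⟫ = ⟪x, A y⟫) (hAcoer : ∀ φ : H, ‖φ‖^2 ≤ ⟪A φ, φ⟫)
    (hPidem : P ∘L P = P) (hPsa : ∀ x y : H, ⟪P x, y⟫ = ⟪x, P y⟫)
    (α b : ℝ) (hα : 0 < α) (hb : 0 ≤ b)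
    (hAP : ∀ φ : H, α * ‖P φ‖^2 ≤ ⟪A (P φ), P φ⟫)
    (hoff : ‖P ∘L A ∘L (1 - P)‖ ≤ b)
    (hαb : b^2 < α) :
    IsUnit A ∧ ∀ φ : H,
      0 ≤ ⟪Ring.inverse A (P φ), P φ⟫ ∧
        ⟪Ring.inverse A (P φ), P φ⟫ ≤ (α - b^2)⁻¹ * ‖P φ‖^2 := by
  -- Step 1: `A` is invertible via Lax–Milgram.
  set B : H →L[ℝ] H →L[ℝ] ℝ := (innerSL ℝ).comp A with hB
  have hBapp : ∀ v w : H, B v w = ⟪A v, w⟫ := fun v w => rfl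
  have hcoer : IsCoercive B := by
    refine ⟨1, one_pos, fun u => ?_⟩
    have := hAcoer u
    calc 1 * ‖u‖ * ‖u‖ = ‖u‖^2 := by ring
      _ ≤ ⟪A u, u⟫ := hAcoer u
      _ = B u u := (hBapp u u).symm
  have he : (hcoer.continuousLinearEquivOfBilin : H →L[ℝ] H) = A := by
    ext v
    refine ext_inner_right ℝ fun w => ?_
    exact (hcoer.continuousLinearEquivOfBilin_apply v w).trans (hBapp v w)
  have hU : IsUnit A := by
    refine ⟨⟨A, (hcoer.continuousLinearEquivOfBilin.symm : H →L[ℝ] H), ?_, ?_⟩, rfl⟩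
    · ext x
      simp only [ContinuousLinearMap.mul_apply, ContinuousLinearMap.one_apply, ← he]
      exact hcoer.continuousLinearEquivOfBilin.apply_symm_apply x
    · ext x
      simp only [ContinuousLinearMap.mul_apply, ContinuousLinearMap.one_apply, ← he]
      exact hcoer.continuousLinearEquivOfBilin.symm_apply_apply x
  refine ⟨hU, fun φ => ?_⟩
  have hPu : P (P φ) = P φ := by
    have := congrArg (fun T : H →L[ℝ] H => T φ) hPidem
    simpa using this
  have hAinv : A (Ring.inverse A (P φ)) = P φ := by
    have h1 : A * Ring.inverse A = 1 := Ring.mul_inverse_cancel A hU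
    have := congrArg (fun T : H →L[ℝ] H => T (P φ)) h1
    simpa using this
  exact schur_aux A P hAsa hAcoer hPidem hPsa α b hb hAP hoff hαb (P φ) (Ring.inverse A (P φ)) hPu hAinv
end

section
/- (Explicit form and bound of the off-diagonal derivative block.) Let β > 0 and V(q) = 1 − cos q. For every integer K ≥ 2 and every φ ∈ L²(ν), (1 − Π_K^q)((Π_K^q φ)') = (β/4)·( ⟨φ, G_{2K−2}⟩_{L²(ν)} G_{2K−1} − ⟨φ, G_{2K−3}⟩_{L²(ν)} G_{2K} ); in particular ‖(1 − Π_K^q)((Π_K^q φ)')‖_{L²(ν)} ≤ (β/4)‖φ‖_{L²(ν)}. -/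
open MeasureTheory Real
open scoped ContDiff

/-- The cosine potential `V(q) = 1 - cos q`. -/
noncomputable def Vcos : ℝ → ℝ := fun q => 1 - Real.cos q


open intervalIntegral
open scoped NNReal ENNReal








lemma contVcos : Continuous Vcos := by unfold Vcos; fun_prop

lemma Vcos_nonneg (q : ℝ) : 0 ≤ Vcos q := by
  simp [Vcos]; exact Real.cos_le_one q

lemma Vcos_le_two (q : ℝ) : Vcos q ≤ 2 := by
  simp [Vcos]; nlinarith [Real.neg_one_le_cos q]

lemma cont_dens (β : ℝ) : Continuous fun q => Real.exp (-(β * Vcos q)) := by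
  have := contVcos; fun_prop

lemma znu_pos (β : ℝ) (hβ : 0 < β) : 0 < Znu β Vcos := by
  have h2π : (0:ℝ) < 2 * π := by positivity
  have hint : IntegrableOn (fun q => Real.exp (-(β * Vcos q))) (Set.Ioc (0:ℝ) (2*π)) volume :=
    ((cont_dens β).integrableOn_Icc (a := 0) (b := 2*π)).mono_set Set.Ioc_subset_Icc_self
  have hlow : ∀ q ∈ Set.Ioc (0:ℝ) (2*π), Real.exp (-(β * 2)) ≤ Real.exp (-(β * Vcos q)) := by
    intro q _
    apply Real.exp_le_exp.mpr
    have := Vcos_le_two q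
    nlinarith
  have := MeasureTheory.setIntegral_mono_on (integrableOn_const (by simp [Real.volume_Ioc, ENNReal.mul_eq_top]))
    hint measurableSet_Ioc hlow
  rw [MeasureTheory.setIntegral_const] at this
  have hvol : (volume (Set.Ioc (0:ℝ) (2*π))).toReal = 2*π := by
    simp [Real.volume_Ioc]; positivity
  unfold Znu
  calc (0:ℝ) < (2*π) * Real.exp (-(β*2)) := by positivity
    _ ≤ _ := by rw [measureReal_def, hvol] at this; simpa [smul_eq_mul] using this



lemma dens_coe (β : ℝ) : (fun q => ENNReal.ofReal (Real.exp (-(β * Vcos q))))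
    = fun q => ((Real.toNNReal (Real.exp (-(β * Vcos q))) : ℝ≥0) : ℝ≥0∞) := rfl

lemma integral_nu (β : ℝ) (hβ : 0 < β) (f : ℝ → ℝ) :
    ∫ q, f q ∂(nuMeas β Vcos)
      = (Znu β Vcos)⁻¹ * ∫ q in Set.Ioc (0:ℝ) (2*π), f q * Real.exp (-(β * Vcos q)) := by
  unfold nuMeas
  rw [MeasureTheory.integral_smul_measure, dens_coe β,
    integral_withDensity_eq_integral_smul (((cont_dens β).measurable).real_toNNReal) f]
  rw [ENNReal.toReal_ofReal (inv_nonneg.mpr (le_of_lt (znu_pos β hβ)))]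
  simp only [smul_eq_mul]
  congr 1
  apply setIntegral_congr_fun measurableSet_Ioc
  intro q _
  simp only [NNReal.smul_def, Real.coe_toNNReal _ (Real.exp_nonneg _), smul_eq_mul]
  ring

lemma integrable_nu (β : ℝ) (f : ℝ → ℝ) (hf : Continuous f) :
    Integrable f (nuMeas β Vcos) := by
  unfold nuMeas
  apply Integrable.smul_measure _ ENNReal.ofReal_ne_top
  rw [dens_coe β, integrable_withDensity_iff (((cont_dens β).measurable).real_toNNReal.coe_nnreal_ennreal) (by simp [ENNReal.coe_lt_top])]
  have : Continuous fun q => f q * Real.exp (-(β * Vcos q)) := by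
    have := cont_dens β; fun_prop
  exact (this.integrableOn_Icc (a := 0) (b := 2*π)).mono_set Set.Ioc_subset_Icc_self |>.congr
    (by
      apply (ae_restrict_iff' measurableSet_Ioc).mpr
      filter_upwards with q _
      simp only [ENNReal.coe_toReal, Real.coe_toNNReal _ (Real.exp_nonneg _)])

lemma nu_finite (β : ℝ) (hβ : 0 < β) : IsFiniteMeasure (nuMeas β Vcos) := by
  constructor
  unfold nuMeas
  rw [Measure.smul_apply, smul_eq_mul, withDensity_apply _ MeasurableSet.univ,
    Measure.restrict_restrict MeasurableSet.univ]
  simp only [Set.univ_inter]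
  have hb : ∫⁻ q in Set.Ioc (0:ℝ) (2*π), ENNReal.ofReal (Real.exp (-(β * Vcos q))) ∂volume
      ≤ ∫⁻ _ in Set.Ioc (0:ℝ) (2*π), 1 ∂volume := by
    apply lintegral_mono
    intro q
    refine ENNReal.ofReal_le_one.mpr (Real.exp_le_one_iff.mpr ?_)
    have := Vcos_nonneg q; nlinarith
  apply lt_of_le_of_lt (mul_le_mul_right hb _)
  simp [Real.volume_Ioc]
  exact ENNReal.mul_lt_top ENNReal.ofReal_lt_top (by finiteness)



lemma int_cos (n : ℤ) :
    ∫ x in (0:ℝ)..(2*π), Real.cos (n * x) = if n = 0 then 2*π else 0 := by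
  rcases eq_or_ne n 0 with h | h
  · simp [h]
  · rw [if_neg h]
    have hc : ((n:ℝ)) ≠ 0 := Int.cast_ne_zero.mpr h
    rw [intervalIntegral.integral_comp_mul_left Real.cos hc, integral_cos]
    have h1 : (n:ℝ) * (2*π) = ((2*n : ℤ) : ℝ) * π := by push_cast; ring
    have h2 : Real.sin ((n:ℝ) * (2*π)) = 0 := by rw [h1]; exact Real.sin_int_mul_pi _
    simp [h2]

lemma int_sin (n : ℤ) :
    ∫ x in (0:ℝ)..(2*π), Real.sin (n * x) = 0 := by
  rcases eq_or_ne n 0 with h | h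
  · simp [h]
  · have hc : ((n:ℝ)) ≠ 0 := Int.cast_ne_zero.mpr h
    rw [intervalIntegral.integral_comp_mul_left Real.sin hc, integral_sin]
    have h1 : (n:ℝ) * (2*π) = ((n : ℤ) : ℝ) * (2*π) := rfl
    simp [h1, Real.cos_int_mul_two_pi]

lemma ii_trig (n : ℤ) : IntervalIntegrable (fun x => Real.cos (n*x)) volume 0 (2*π) :=
  (by fun_prop : Continuous fun x : ℝ => Real.cos (n*x)).intervalIntegrable _ _

lemma ii_trig' (n : ℤ) : IntervalIntegrable (fun x => Real.sin (n*x)) volume 0 (2*π) :=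
  (by fun_prop : Continuous fun x : ℝ => Real.sin (n*x)).intervalIntegrable _ _

lemma int_cc (a b : ℕ) :
    ∫ x in (0:ℝ)..(2*π), Real.cos (a * x) * Real.cos (b * x)
      = if a = b then (if a = 0 then 2*π else π) else 0 := by
  have key : ∀ x : ℝ, Real.cos (a*x) * Real.cos (b*x)
      = (Real.cos (((a - b : ℤ) : ℝ) * x) + Real.cos (((a + b : ℤ) : ℝ) * x))/2 := by
    intro x
    have := Real.two_mul_cos_mul_cos ((a:ℝ)*x) ((b:ℝ)*x)
    have h1 : (a:ℝ)*x - (b:ℝ)*x = ((a - b : ℤ) : ℝ) * x := by push_cast; ring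
    have h2 : (a:ℝ)*x + (b:ℝ)*x = ((a + b : ℤ) : ℝ) * x := by push_cast; ring
    rw [h1, h2] at this
    linarith
  simp only [key]
  rw [intervalIntegral.integral_div, intervalIntegral.integral_add (ii_trig _) (ii_trig _),
    int_cos, int_cos]
  rcases eq_or_ne a b with h | h
  · subst h
    rcases eq_or_ne a 0 with h0 | h0
    · simp [h0]
    · have : ¬((a:ℤ) + a = 0) := by omega
      simp [h0, this]
  · have h1 : ¬((a:ℤ) - b = 0) := by omega
    rcases eq_or_ne ((a:ℤ)+b) 0 with h3 | h3
    · exfalso; omega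
    · simp [h1, h3, h]

lemma int_ss (a b : ℕ) :
    ∫ x in (0:ℝ)..(2*π), Real.sin (a * x) * Real.sin (b * x)
      = if a = b then (if a = 0 then 0 else π) else 0 := by
  have key : ∀ x : ℝ, Real.sin (a*x) * Real.sin (b*x)
      = (Real.cos (((a - b : ℤ) : ℝ) * x) - Real.cos (((a + b : ℤ) : ℝ) * x))/2 := by
    intro x
    have := Real.two_mul_sin_mul_sin ((a:ℝ)*x) ((b:ℝ)*x)
    have h1 : (a:ℝ)*x - (b:ℝ)*x = ((a - b : ℤ) : ℝ) * x := by push_cast; ring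
    have h2 : (a:ℝ)*x + (b:ℝ)*x = ((a + b : ℤ) : ℝ) * x := by push_cast; ring
    rw [h1, h2] at this
    linarith
  simp only [key]
  rw [intervalIntegral.integral_div, intervalIntegral.integral_sub (ii_trig _) (ii_trig _),
    int_cos, int_cos]
  rcases eq_or_ne a b with h | h
  · subst h
    rcases eq_or_ne a 0 with h0 | h0
    · simp [h0]
    · have : ¬((a:ℤ) + a = 0) := by omega
      simp [h0, this]
  · have h1 : ¬((a:ℤ) - b = 0) := by omega
    rcases eq_or_ne ((a:ℤ)+b) 0 with h3 | h3
    · exfalso; omega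
    · simp [h1, h3, h]

lemma int_sc (a b : ℕ) :
    ∫ x in (0:ℝ)..(2*π), Real.sin (a * x) * Real.cos (b * x) = 0 := by
  have key : ∀ x : ℝ, Real.sin (a*x) * Real.cos (b*x)
      = (Real.sin (((a - b : ℤ) : ℝ) * x) + Real.sin (((a + b : ℤ) : ℝ) * x))/2 := by
    intro x
    have := Real.two_mul_sin_mul_cos ((a:ℝ)*x) ((b:ℝ)*x)
    have h1 : (a:ℝ)*x - (b:ℝ)*x = ((a - b : ℤ) : ℝ) * x := by push_cast; ring
    have h2 : (a:ℝ)*x + (b:ℝ)*x = ((a + b : ℤ) : ℝ) * x := by push_cast; ring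
    rw [h1, h2] at this
    linarith
  simp only [key]
  rw [intervalIntegral.integral_div, intervalIntegral.integral_add (ii_trig' _) (ii_trig' _),
    int_sin, int_sin]
  norm_num


/-- uniform frequency -/
def freqG (j : ℕ) : ℕ := if j % 2 = 0 then j / 2 else (j+1)/2

noncomputable def coefG (β : ℝ) (j : ℕ) : ℝ :=
  if j = 0 then Real.sqrt (Znu β Vcos / (2*π)) else Real.sqrt (Znu β Vcos / π)

noncomputable def trigG (j : ℕ) (x : ℝ) : ℝ :=
  if j % 2 = 0 then Real.cos (freqG j * x) else Real.sin (freqG j * x)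

lemma Gfun_eq (β : ℝ) (j : ℕ) :
    Gfun β Vcos j = fun q => coefG β j * trigG j q * Real.exp (β * Vcos q / 2) := by
  funext q
  rcases (by omega : j = 0 ∨ (j % 2 = 0 ∧ j ≠ 0) ∨ j % 2 = 1) with h | ⟨h1, h2⟩ | h
  · simp [Gfun, h, coefG, trigG, freqG]
  · simp [Gfun, h1, h2, coefG, trigG, freqG]
  · have h2 : j ≠ 0 := by omega
    have h1 : ¬ (j % 2 = 0) := by omega
    simp [Gfun, h1, h2, coefG, trigG, freqG]

lemma cont_trigG (j : ℕ) : Continuous (trigG j) := by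
  unfold trigG; split_ifs <;> fun_prop

lemma cont_E (β : ℝ) : Continuous fun q => Real.exp (β * Vcos q / 2) := by
  have := contVcos; fun_prop

lemma cont_G (β : ℝ) (j : ℕ) : Continuous (Gfun β Vcos j) := by
  rw [Gfun_eq]
  exact ((continuous_const.mul (cont_trigG j)).mul (cont_E β))

lemma EEexp (β q : ℝ) : Real.exp (β * Vcos q / 2) * Real.exp (β * Vcos q / 2)
    * Real.exp (-(β * Vcos q)) = 1 := by
  rw [← Real.exp_add, ← Real.exp_add,
    show β * Vcos q / 2 + β * Vcos q / 2 + -(β * Vcos q) = 0 by ring, Real.exp_zero]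

lemma nu_prod (β : ℝ) (hβ : 0 < β) (c1 c2 : ℝ) (t1 t2 : ℝ → ℝ) :
    ∫ q, (c1 * t1 q * Real.exp (β * Vcos q / 2)) * (c2 * t2 q * Real.exp (β * Vcos q / 2))
        ∂(nuMeas β Vcos)
      = (Znu β Vcos)⁻¹ * ((c1 * c2) * ∫ x in (0:ℝ)..(2*π), t1 x * t2 x) := by
  rw [integral_nu β hβ, intervalIntegral.integral_of_le (by positivity : (0:ℝ) ≤ 2*π)]
  congr 1
  rw [MeasureTheory.setIntegral_congr_fun measurableSet_Ioc
    (g := fun q => (c1 * c2) * (t1 q * t2 q)) (fun q _ => by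
      have := EEexp β q
      calc c1 * t1 q * Real.exp (β * Vcos q / 2) * (c2 * t2 q * Real.exp (β * Vcos q / 2))
            * Real.exp (-(β * Vcos q))
          = (c1 * c2) * (t1 q * t2 q) * (Real.exp (β * Vcos q / 2) * Real.exp (β * Vcos q / 2)
            * Real.exp (-(β * Vcos q))) := by ring
        _ = (c1 * c2) * (t1 q * t2 q) := by rw [this, mul_one]),
    MeasureTheory.integral_const_mul]

lemma int_cs (a b : ℕ) :
    ∫ x in (0:ℝ)..(2*π), Real.cos (a * x) * Real.sin (b * x) = 0 := by
  simp_rw [mul_comm (Real.cos _)]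
  exact int_sc b a

lemma freqG_even {j : ℕ} (h : j % 2 = 0) (h0 : j ≠ 0) : 1 ≤ freqG j := by
  unfold freqG; simp [h]; omega

lemma G_orth (β : ℝ) (hβ : 0 < β) (i j : ℕ) :
    ∫ q, Gfun β Vcos i q * Gfun β Vcos j q ∂(nuMeas β Vcos) = if i = j then 1 else 0 := by
  have hZ := znu_pos β hβ
  have hπ := Real.pi_pos
  rw [Gfun_eq, Gfun_eq]
  rw [nu_prod β hβ]
  rcases (by omega : i % 2 = 0 ∨ i % 2 = 1) with hi | hi <;>
    rcases (by omega : j % 2 = 0 ∨ j % 2 = 1) with hj | hj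
  · -- cos-cos
    simp only [trigG, hi, hj, if_pos]
    rw [int_cc]
    rcases eq_or_ne i j with h | h
    · subst h
      rw [if_pos rfl, if_pos rfl]
      rcases eq_or_ne i 0 with h0 | h0
      · simp only [freqG, hi, if_pos, h0, coefG, if_pos rfl]
        rw [Real.mul_self_sqrt (by positivity)]
        field_simp
      · have : freqG i ≠ 0 := by have := freqG_even hi h0; omega
        rw [if_neg this]
        simp only [coefG, if_neg h0]
        rw [Real.mul_self_sqrt (by positivity)]
        field_simp
    · have : freqG i ≠ freqG j := by
        unfold freqG; simp [hi, hj]; omega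
      rw [if_neg this, if_neg h]
      ring
  · -- cos-sin
    have hij : i ≠ j := by omega
    simp only [trigG, hi, hj]
    norm_num
    rw [int_cs, if_neg hij]
    ring
  · -- sin-cos
    have hij : i ≠ j := by omega
    simp only [trigG, hi, hj]
    norm_num
    rw [int_sc, if_neg hij]
    ring
  · -- sin-sin
    simp only [trigG, hi, hj]
    norm_num
    rw [int_ss]
    rcases eq_or_ne i j with h | h
    · subst h
      have hf : freqG i ≠ 0 := by unfold freqG; simp [show ¬ (i % 2 = 0) by omega]; omega
      rw [if_pos rfl, if_pos rfl, if_neg hf]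
      simp only [coefG, if_neg (show i ≠ 0 by omega)]
      rw [Real.mul_self_sqrt (by positivity)]
      field_simp
    · have : freqG i ≠ freqG j := by
        unfold freqG
        simp [show ¬ (i % 2 = 0) by omega, show ¬ (j % 2 = 0) by omega]
        omega
      rw [if_neg this, if_neg h]
      ring
noncomputable def Rc (β : ℝ) (j m : ℕ) : ℝ :=
  (if j = 0 ∧ m = 1 then β / (2*Real.sqrt 2) else 0)
+ (if j % 2 = 1 ∧ m = j+1 then (((j+1)/2 : ℕ) : ℝ) else 0)
+ (if j % 2 = 1 ∧ m = j+3 then -(β/4) else 0)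
+ (if j = 1 ∧ m = 0 then β * Real.sqrt 2 / 4 else 0)
+ (if j % 2 = 1 ∧ 3 ≤ j ∧ m = j-1 then β/4 else 0)
+ (if j % 2 = 0 ∧ j ≠ 0 ∧ m = j-1 then -(((j/2 : ℕ) : ℝ)) else 0)
+ (if j % 2 = 0 ∧ j ≠ 0 ∧ m = j+1 then β/4 else 0)
+ (if j % 2 = 0 ∧ 4 ≤ j ∧ m = j-3 then -(β/4) else 0)

lemma Rc_zero (β : ℝ) {j m : ℕ} (h : j + 4 ≤ m) : Rc β j m = 0 := by
  unfold Rc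
  rw [if_neg (by omega), if_neg (by omega), if_neg (by omega), if_neg (by omega),
    if_neg (by omega), if_neg (by omega), if_neg (by omega), if_neg (by omega)]
  norm_num

lemma sum_ite_coeff {n i : ℕ} (hi : i < n) (v : ℝ) (f : ℕ → ℝ) :
    ∑ m ∈ Finset.range n, (if m = i then v else 0) * f m = v * f i := by
  rw [Finset.sum_eq_single i]
  · rw [if_pos rfl]
  · intro b _ hb; rw [if_neg hb, zero_mul]
  · intro hni; exact absurd (Finset.mem_range.mpr hi) hni

-- derivative helpers
lemma hasDerivAt_E (β q : ℝ) :
    HasDerivAt (fun q => Real.exp (β * Vcos q / 2)) (β * Real.sin q / 2 * Real.exp (β * Vcos q / 2)) q := by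
  have h1 : HasDerivAt (fun q : ℝ => β * Vcos q / 2) (β * Real.sin q / 2) q := by
    have hc : HasDerivAt Vcos (Real.sin q) q := by
      have := (Real.hasDerivAt_cos q).const_sub 1
      unfold Vcos; simpa using this
    simpa [mul_comm, mul_div_assoc] using (hc.const_mul β).div_const 2
  simpa [mul_comm] using h1.exp

lemma hasDerivAt_coskx (a q : ℝ) :
    HasDerivAt (fun q : ℝ => Real.cos (a * q)) (-(a * Real.sin (a * q))) q := by
  have := (Real.hasDerivAt_cos (a * q)).comp q ((hasDerivAt_id q).const_mul a)
  simpa [mul_comm, Function.comp_def] using this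

lemma hasDerivAt_sinkx (a q : ℝ) :
    HasDerivAt (fun q : ℝ => Real.sin (a * q)) (a * Real.cos (a * q)) q := by
  have := (Real.hasDerivAt_sin (a * q)).comp q ((hasDerivAt_id q).const_mul a)
  simpa [mul_comm, Function.comp_def] using this

lemma hasDerivAt_G_cos (β : ℝ) (c a q : ℝ) :
    HasDerivAt (fun q : ℝ => c * Real.cos (a * q) * Real.exp (β * Vcos q / 2))
      (c * (-(a * Real.sin (a * q)) + β * Real.sin q / 2 * Real.cos (a * q))
        * Real.exp (β * Vcos q / 2)) q := by
  have h := ((hasDerivAt_coskx a q).mul (hasDerivAt_E β q)).const_mul c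
  have heq : (fun y : ℝ => c * (Real.cos (a*y) * Real.exp (β * Vcos y / 2)))
      = fun q : ℝ => c * Real.cos (a * q) * Real.exp (β * Vcos q / 2) := by
    funext y; ring
  simp only [Pi.mul_apply] at h
  rw [heq] at h
  exact h.congr_deriv (by ring)

lemma hasDerivAt_G_sin (β : ℝ) (c a q : ℝ) :
    HasDerivAt (fun q : ℝ => c * Real.sin (a * q) * Real.exp (β * Vcos q / 2))
      (c * (a * Real.cos (a * q) + β * Real.sin q / 2 * Real.sin (a * q))
        * Real.exp (β * Vcos q / 2)) q := by
  have h := ((hasDerivAt_sinkx a q).mul (hasDerivAt_E β q)).const_mul c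
  have heq : (fun y : ℝ => c * (Real.sin (a*y) * Real.exp (β * Vcos y / 2)))
      = fun q : ℝ => c * Real.sin (a * q) * Real.exp (β * Vcos q / 2) := by
    funext y; ring
  simp only [Pi.mul_apply] at h
  rw [heq] at h
  exact h.congr_deriv (by ring)

lemma sin_mul_cos' (a q : ℝ) : Real.sin q * Real.cos (a * q)
    = (Real.sin ((a+1)*q) - Real.sin ((a-1)*q)) / 2 := by
  have h := Real.two_mul_sin_mul_cos q (a*q)
  have h1 : q - a*q = -((a-1)*q) := by ring
  have h2 : q + a*q = (a+1)*q := by ring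
  rw [h1, h2, Real.sin_neg] at h
  linarith

lemma sin_mul_sin' (a q : ℝ) : Real.sin q * Real.sin (a * q)
    = (Real.cos ((a-1)*q) - Real.cos ((a+1)*q)) / 2 := by
  have h := Real.two_mul_sin_mul_sin q (a*q)
  have h1 : q - a*q = -((a-1)*q) := by ring
  have h2 : q + a*q = (a+1)*q := by ring
  rw [h1, h2, Real.cos_neg] at h
  linarith
lemma Gfun_zero_eq (β : ℝ) : Gfun β Vcos 0
    = fun q => Real.sqrt (Znu β Vcos / (2*π)) * Real.exp (β * Vcos q / 2) :=
  funext fun q => by unfold Gfun; rw [if_pos rfl]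

lemma Gfun_even_eq (β : ℝ) {j : ℕ} (h0 : j ≠ 0) (h : j % 2 = 0) : Gfun β Vcos j
    = fun q => Real.sqrt (Znu β Vcos / π) * Real.cos ((j/2 : ℕ) * q)
        * Real.exp (β * Vcos q / 2) :=
  funext fun q => by unfold Gfun; rw [if_neg h0, if_pos h]

lemma Gfun_odd_eq (β : ℝ) {j : ℕ} (h : j % 2 = 1) : Gfun β Vcos j
    = fun q => Real.sqrt (Znu β Vcos / π) * Real.sin (((j+1)/2 : ℕ) * q)
        * Real.exp (β * Vcos q / 2) :=
  funext fun q => by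
    unfold Gfun; rw [if_neg (by omega : ¬ j = 0), if_neg (by omega : ¬ j % 2 = 0)]

lemma sqrt_two_rel (β : ℝ) : Real.sqrt (Znu β Vcos / π)
    = Real.sqrt 2 * Real.sqrt (Znu β Vcos / (2*π)) := by
  rw [← Real.sqrt_mul (by norm_num : (0:ℝ) ≤ 2)]
  congr 1
  have : π ≠ 0 := Real.pi_ne_zero
  field_simp

lemma hasDerivAt_G (β : ℝ) (j : ℕ) (q : ℝ) :
    HasDerivAt (Gfun β Vcos j)
      (∑ m ∈ Finset.range (j+4), Rc β j m * Gfun β Vcos m q) q := by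
  have hs2 : Real.sqrt 2 ≠ 0 := by positivity
  have hs22 : Real.sqrt 2 * Real.sqrt 2 = 2 := Real.mul_self_sqrt (by norm_num)
  have hcase : j = 0 ∨ j = 1 ∨ j = 2 ∨ (∃ k, j = 2*k+3) ∨ (∃ k, j = 2*k+4) := by
    rcases Nat.lt_or_ge j 3 with h | h
    · interval_cases j <;> simp
    · rcases Nat.even_or_odd j with ⟨k, hk⟩ | ⟨k, hk⟩
      · exact Or.inr (Or.inr (Or.inr (Or.inr ⟨k-2, by omega⟩)))
      · exact Or.inr (Or.inr (Or.inr (Or.inl ⟨k-1, by omega⟩)))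
  rcases hcase with h | h | h | ⟨k, h⟩ | ⟨k, h⟩ <;> subst h
  · -- j = 0
    have e1 : ∀ m, Rc β 0 m = if m = 1 then β / (2*Real.sqrt 2) else 0 := by
      intro m
      unfold Rc
      rw [if_neg (show ¬((0:ℕ) % 2 = 1 ∧ m = 0+1) by omega),
        if_neg (show ¬((0:ℕ) % 2 = 1 ∧ m = 0+3) by omega),
        if_neg (show ¬((0:ℕ) = 1 ∧ m = 0) by omega),
        if_neg (show ¬((0:ℕ) % 2 = 1 ∧ 3 ≤ 0 ∧ m = 0-1) by omega),
        if_neg (show ¬((0:ℕ) % 2 = 0 ∧ (0:ℕ) ≠ 0 ∧ m = 0-1) by omega),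
        if_neg (show ¬((0:ℕ) % 2 = 0 ∧ (0:ℕ) ≠ 0 ∧ m = 0+1) by omega),
        if_neg (show ¬((0:ℕ) % 2 = 0 ∧ 4 ≤ 0 ∧ m = 0-3) by omega),
        if_congr (show ((0:ℕ) = 0 ∧ m = 1) ↔ m = 1 by omega) rfl rfl]
      ring
    simp only [e1]
    rw [sum_ite_coeff (by norm_num) _ (fun m => Gfun β Vcos m q)]
    rw [Gfun_zero_eq, Gfun_odd_eq β (by norm_num : 1 % 2 = 1)]
    have hd := (hasDerivAt_E β q).const_mul (Real.sqrt (Znu β Vcos / (2*π)))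
    refine hd.congr_deriv (Eq.symm ?_)
    simp only [show ((1+1)/2 : ℕ) = 1 from rfl, Nat.cast_one, one_mul]
    rw [sqrt_two_rel]
    field_simp
  · -- j = 1
    have e1 : ∀ m, Rc β 1 m = (if m = 2 then (1:ℝ) else 0)
        + (if m = 4 then -(β/4) else 0) + (if m = 0 then β * Real.sqrt 2 / 4 else 0) := by
      intro m
      unfold Rc
      rw [if_neg (show ¬((1:ℕ) = 0 ∧ m = 1) by omega),
        if_neg (show ¬((1:ℕ) % 2 = 1 ∧ 3 ≤ 1 ∧ m = 1-1) by omega),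
        if_neg (show ¬((1:ℕ) % 2 = 0 ∧ (1:ℕ) ≠ 0 ∧ m = 1-1) by omega),
        if_neg (show ¬((1:ℕ) % 2 = 0 ∧ (1:ℕ) ≠ 0 ∧ m = 1+1) by omega),
        if_neg (show ¬((1:ℕ) % 2 = 0 ∧ 4 ≤ 1 ∧ m = 1-3) by omega),
        if_congr (show ((1:ℕ) % 2 = 1 ∧ m = 1+1) ↔ m = 2 by omega) rfl rfl,
        if_congr (show ((1:ℕ) % 2 = 1 ∧ m = 1+3) ↔ m = 4 by omega) rfl rfl,
        if_congr (show ((1:ℕ) = 1 ∧ m = 0) ↔ m = 0 by omega) rfl rfl]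
      simp only [show ((1+1)/2 : ℕ) = 1 from rfl, Nat.cast_one]
      ring
    simp only [e1, add_mul, Finset.sum_add_distrib]
    rw [sum_ite_coeff (by norm_num) _ (fun m => Gfun β Vcos m q),
      sum_ite_coeff (by norm_num) _ (fun m => Gfun β Vcos m q),
      sum_ite_coeff (by norm_num) _ (fun m => Gfun β Vcos m q)]
    rw [Gfun_odd_eq β (by norm_num : 1 % 2 = 1), Gfun_zero_eq,
      Gfun_even_eq β (by norm_num) (by norm_num : 2 % 2 = 0),
      Gfun_even_eq β (by norm_num) (by norm_num : 4 % 2 = 0)]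
    simp only [show ((1+1)/2 : ℕ) = 1 from rfl, show ((2:ℕ)/2 : ℕ) = 1 from rfl,
      show ((4:ℕ)/2 : ℕ) = 2 from rfl, Nat.cast_one, Nat.cast_ofNat]
    have hd := hasDerivAt_G_sin β (Real.sqrt (Znu β Vcos / π)) 1 q
    refine hd.congr_deriv (Eq.symm ?_)
    have h5 := sin_mul_sin' 1 q
    rw [show ((1:ℝ)-1)*q = (0:ℝ)*q by ring, show ((1:ℝ)+1)*q = (2:ℝ)*q by ring] at h5
    simp only [zero_mul, Real.cos_zero] at h5
    have hsq := sqrt_two_rel β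
    linear_combination (-(β/2) * Real.sqrt (Znu β Vcos / π) * Real.exp (β * Vcos q / 2)) * h5 + (-(β/4) * Real.exp (β * Vcos q / 2)) * hsq
  · -- j = 2
    have e1 : ∀ m, Rc β 2 m = (if m = 1 then (-1:ℝ) else 0)
        + (if m = 3 then β/4 else 0) := by
      intro m
      unfold Rc
      rw [if_neg (show ¬((2:ℕ) = 0 ∧ m = 1) by omega),
        if_neg (show ¬((2:ℕ) % 2 = 1 ∧ m = 2+1) by omega),
        if_neg (show ¬((2:ℕ) % 2 = 1 ∧ m = 2+3) by omega),
        if_neg (show ¬((2:ℕ) = 1 ∧ m = 0) by omega),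
        if_neg (show ¬((2:ℕ) % 2 = 1 ∧ 3 ≤ 2 ∧ m = 2-1) by omega),
        if_neg (show ¬((2:ℕ) % 2 = 0 ∧ 4 ≤ 2 ∧ m = 2-3) by omega),
        if_congr (show ((2:ℕ) % 2 = 0 ∧ (2:ℕ) ≠ 0 ∧ m = 2-1) ↔ m = 1 by omega) rfl rfl,
        if_congr (show ((2:ℕ) % 2 = 0 ∧ (2:ℕ) ≠ 0 ∧ m = 2+1) ↔ m = 3 by omega) rfl rfl]
      simp only [show ((2:ℕ)/2 : ℕ) = 1 from rfl, Nat.cast_one]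
      ring
    simp only [e1, add_mul, Finset.sum_add_distrib]
    rw [sum_ite_coeff (by norm_num) _ (fun m => Gfun β Vcos m q),
      sum_ite_coeff (by norm_num) _ (fun m => Gfun β Vcos m q)]
    rw [Gfun_odd_eq β (by norm_num : 1 % 2 = 1), Gfun_odd_eq β (by norm_num : 3 % 2 = 1),
      Gfun_even_eq β (by norm_num) (by norm_num : 2 % 2 = 0)]
    simp only [show ((1+1)/2 : ℕ) = 1 from rfl, show ((3+1)/2 : ℕ) = 2 from rfl,
      show ((2:ℕ)/2 : ℕ) = 1 from rfl, Nat.cast_one, Nat.cast_ofNat]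
    have hd := hasDerivAt_G_cos β (Real.sqrt (Znu β Vcos / π)) 1 q
    refine hd.congr_deriv (Eq.symm ?_)
    have h5 := sin_mul_cos' 1 q
    rw [show ((1:ℝ)+1)*q = (2:ℝ)*q by ring, show ((1:ℝ)-1)*q = (0:ℝ)*q by ring] at h5
    simp only [zero_mul, Real.sin_zero] at h5
    linear_combination (-(β/2) * Real.sqrt (Znu β Vcos / π) * Real.exp (β * Vcos q / 2)) * h5
  · -- j = 2k+3 (odd ≥ 3)
    have e1 : ∀ m, Rc β (2*k+3) m = (if m = 2*k+4 then ((k:ℝ)+2) else 0)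
        + (if m = 2*k+6 then -(β/4) else 0) + (if m = 2*k+2 then β/4 else 0) := by
      intro m
      unfold Rc
      rw [if_neg (show ¬(2*k+3 = 0 ∧ m = 1) by omega),
        if_neg (show ¬(2*k+3 = 1 ∧ m = 0) by omega),
        if_neg (show ¬((2*k+3) % 2 = 0 ∧ 2*k+3 ≠ 0 ∧ m = 2*k+3-1) by omega),
        if_neg (show ¬((2*k+3) % 2 = 0 ∧ 2*k+3 ≠ 0 ∧ m = 2*k+3+1) by omega),
        if_neg (show ¬((2*k+3) % 2 = 0 ∧ 4 ≤ 2*k+3 ∧ m = 2*k+3-3) by omega),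
        if_congr (show ((2*k+3) % 2 = 1 ∧ m = 2*k+3+1) ↔ m = 2*k+4 by omega) rfl rfl,
        if_congr (show ((2*k+3) % 2 = 1 ∧ m = 2*k+3+3) ↔ m = 2*k+6 by omega) rfl rfl,
        if_congr (show ((2*k+3) % 2 = 1 ∧ 3 ≤ 2*k+3 ∧ m = 2*k+3-1) ↔ m = 2*k+2 by omega)
          rfl rfl]
      rw [show ((2*k+3+1)/2 : ℕ) = k+2 by omega]
      push_cast
      ring
    simp only [e1, add_mul, Finset.sum_add_distrib]
    rw [sum_ite_coeff (by omega) _ (fun m => Gfun β Vcos m q),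
      sum_ite_coeff (by omega) _ (fun m => Gfun β Vcos m q),
      sum_ite_coeff (by omega) _ (fun m => Gfun β Vcos m q)]
    rw [Gfun_odd_eq β (by omega : (2*k+3) % 2 = 1),
      Gfun_even_eq β (by omega) (by omega : (2*k+4) % 2 = 0),
      Gfun_even_eq β (by omega) (by omega : (2*k+6) % 2 = 0),
      Gfun_even_eq β (by omega) (by omega : (2*k+2) % 2 = 0)]
    simp only [show ((2*k+3+1)/2 : ℕ) = k+2 from by omega,
      show ((2*k+4)/2 : ℕ) = k+2 from by omega,
      show ((2*k+6)/2 : ℕ) = k+3 from by omega,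
      show ((2*k+2)/2 : ℕ) = k+1 from by omega]
    push_cast
    have hd := hasDerivAt_G_sin β (Real.sqrt (Znu β Vcos / π)) ((k:ℝ)+2) q
    refine hd.congr_deriv (Eq.symm ?_)
    have h5 := sin_mul_sin' ((k:ℝ)+2) q
    rw [show ((k:ℝ)+2-1)*q = ((k:ℝ)+1)*q by ring,
      show ((k:ℝ)+2+1)*q = ((k:ℝ)+3)*q by ring] at h5
    linear_combination (-(β/2) * Real.sqrt (Znu β Vcos / π) * Real.exp (β * Vcos q / 2)) * h5
  · -- j = 2k+4 (even ≥ 4)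
    have e1 : ∀ m, Rc β (2*k+4) m = (if m = 2*k+3 then -((k:ℝ)+2) else 0)
        + (if m = 2*k+5 then β/4 else 0) + (if m = 2*k+1 then -(β/4) else 0) := by
      intro m
      unfold Rc
      rw [if_neg (show ¬(2*k+4 = 0 ∧ m = 1) by omega),
        if_neg (show ¬((2*k+4) % 2 = 1 ∧ m = 2*k+4+1) by omega),
        if_neg (show ¬((2*k+4) % 2 = 1 ∧ m = 2*k+4+3) by omega),
        if_neg (show ¬(2*k+4 = 1 ∧ m = 0) by omega),
        if_neg (show ¬((2*k+4) % 2 = 1 ∧ 3 ≤ 2*k+4 ∧ m = 2*k+4-1) by omega),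
        if_congr (show ((2*k+4) % 2 = 0 ∧ 2*k+4 ≠ 0 ∧ m = 2*k+4-1) ↔ m = 2*k+3 by omega)
          rfl rfl,
        if_congr (show ((2*k+4) % 2 = 0 ∧ 2*k+4 ≠ 0 ∧ m = 2*k+4+1) ↔ m = 2*k+5 by omega)
          rfl rfl,
        if_congr (show ((2*k+4) % 2 = 0 ∧ 4 ≤ 2*k+4 ∧ m = 2*k+4-3) ↔ m = 2*k+1 by omega)
          rfl rfl]
      rw [show ((2*k+4)/2 : ℕ) = k+2 by omega]
      push_cast
      ring
    simp only [e1, add_mul, Finset.sum_add_distrib]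
    rw [sum_ite_coeff (by omega) _ (fun m => Gfun β Vcos m q),
      sum_ite_coeff (by omega) _ (fun m => Gfun β Vcos m q),
      sum_ite_coeff (by omega) _ (fun m => Gfun β Vcos m q)]
    rw [Gfun_even_eq β (by omega) (by omega : (2*k+4) % 2 = 0),
      Gfun_odd_eq β (by omega : (2*k+3) % 2 = 1),
      Gfun_odd_eq β (by omega : (2*k+5) % 2 = 1),
      Gfun_odd_eq β (by omega : (2*k+1) % 2 = 1)]
    simp only [show ((2*k+4)/2 : ℕ) = k+2 from by omega,
      show ((2*k+3+1)/2 : ℕ) = k+2 from by omega,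
      show ((2*k+5+1)/2 : ℕ) = k+3 from by omega,
      show ((2*k+1+1)/2 : ℕ) = k+1 from by omega]
    push_cast
    have hd := hasDerivAt_G_cos β (Real.sqrt (Znu β Vcos / π)) ((k:ℝ)+2) q
    refine hd.congr_deriv (Eq.symm ?_)
    have h5 := sin_mul_cos' ((k:ℝ)+2) q
    rw [show ((k:ℝ)+2+1)*q = ((k:ℝ)+3)*q by ring,
      show ((k:ℝ)+2-1)*q = ((k:ℝ)+1)*q by ring] at h5
    linear_combination (-(β/2) * Real.sqrt (Znu β Vcos / π) * Real.exp (β * Vcos q / 2)) * h5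


noncomputable def acoef (β : ℝ) (φ : ℝ → ℝ) (j : ℕ) : ℝ :=
  ∫ q', φ q' * Gfun β Vcos j q' ∂(nuMeas β Vcos)

lemma proj_eq (β : ℝ) (K : ℕ) (φ : ℝ → ℝ) :
    projq β Vcos K φ
      = fun q => ∑ j ∈ Finset.range (2*K - 1), acoef β φ j * Gfun β Vcos j q := rfl

lemma int_GG (β : ℝ) (i j : ℕ) :
    Integrable (fun q => Gfun β Vcos i q * Gfun β Vcos j q) (nuMeas β Vcos) :=
  integrable_nu β _ ((cont_G β i).mul (cont_G β j))

lemma deriv_proj (β : ℝ) (K : ℕ) (φ : ℝ → ℝ) (q : ℝ) :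
    deriv (projq β Vcos K φ) q
      = ∑ j ∈ Finset.range (2*K - 1), acoef β φ j
          * (∑ m ∈ Finset.range (j+4), Rc β j m * Gfun β Vcos m q) := by
  apply HasDerivAt.deriv
  rw [proj_eq]
  exact HasDerivAt.fun_sum fun j _ => (hasDerivAt_G β j q).const_mul (acoef β φ j)

lemma integral_D_G (β : ℝ) (hβ : 0 < β) (K : ℕ) (φ : ℝ → ℝ) (i : ℕ) :
    ∫ q', deriv (projq β Vcos K φ) q' * Gfun β Vcos i q' ∂(nuMeas β Vcos)
      = ∑ j ∈ Finset.range (2*K - 1), acoef β φ j * Rc β j i := by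
  have hpt : ∀ q', deriv (projq β Vcos K φ) q' * Gfun β Vcos i q'
      = ∑ j ∈ Finset.range (2*K - 1), ∑ m ∈ Finset.range (j+4),
          (acoef β φ j * Rc β j m) * (Gfun β Vcos m q' * Gfun β Vcos i q') := by
    intro q'
    rw [deriv_proj, Finset.sum_mul]
    refine Finset.sum_congr rfl fun j _ => ?_
    rw [Finset.mul_sum, Finset.sum_mul]
    exact Finset.sum_congr rfl fun m _ => by ring
  rw [MeasureTheory.integral_congr_ae (Filter.Eventually.of_forall hpt)]
  have hint : ∀ j ∈ Finset.range (2*K - 1),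
      Integrable (fun q' => ∑ m ∈ Finset.range (j+4),
        (acoef β φ j * Rc β j m) * (Gfun β Vcos m q' * Gfun β Vcos i q')) (nuMeas β Vcos) :=
    fun j _ => integrable_finset_sum _ (fun m _ => (int_GG β m i).const_mul _)
  rw [MeasureTheory.integral_finset_sum _ hint]
  refine Finset.sum_congr rfl fun j _ => ?_
  rw [MeasureTheory.integral_finset_sum _ (fun m _ => (int_GG β m i).const_mul _)]
  have : ∀ m ∈ Finset.range (j+4),
      ∫ q', (acoef β φ j * Rc β j m) * (Gfun β Vcos m q' * Gfun β Vcos i q') ∂(nuMeas β Vcos)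
      = if m = i then acoef β φ j * Rc β j m else 0 := by
    intro m _
    rw [MeasureTheory.integral_const_mul, G_orth β hβ m i]
    split_ifs <;> simp
  rw [Finset.sum_congr rfl this]
  rcases lt_or_ge i (j+4) with hi | hi
  · rw [Finset.sum_ite_eq' (Finset.range (j+4)) i (fun m => acoef β φ j * Rc β j m),
      if_pos (Finset.mem_range.mpr hi)]
  · rw [Finset.sum_ite_eq' (Finset.range (j+4)) i (fun m => acoef β φ j * Rc β j m),
      if_neg (by simp; omega), Rc_zero β hi, mul_zero]
lemma G_bdd (β : ℝ) (hβ : 0 < β) (j : ℕ) :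
    ∃ C, ∀ q, ‖Gfun β Vcos j q‖ ≤ C := by
  refine ⟨(Real.sqrt (Znu β Vcos / (2*π)) + Real.sqrt (Znu β Vcos / π)) * Real.exp β, ?_⟩
  intro q
  rw [Gfun_eq]
  have h1 : |coefG β j| ≤ Real.sqrt (Znu β Vcos / (2*π)) + Real.sqrt (Znu β Vcos / π) := by
    unfold coefG
    split_ifs <;>
      rw [abs_of_nonneg (Real.sqrt_nonneg _)] <;>
      [linarith [Real.sqrt_nonneg (Znu β Vcos / π)];
       linarith [Real.sqrt_nonneg (Znu β Vcos / (2*π))]]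
  have h2 : |trigG j q| ≤ 1 := by
    unfold trigG; split_ifs
    · exact Real.abs_cos_le_one _
    · exact Real.abs_sin_le_one _
  have h3 : |Real.exp (β * Vcos q / 2)| ≤ Real.exp β := by
    rw [abs_of_pos (Real.exp_pos _)]
    apply Real.exp_le_exp.mpr
    have := Vcos_le_two q
    have := Vcos_nonneg q
    nlinarith
  calc ‖coefG β j * trigG j q * Real.exp (β * Vcos q / 2)‖
      = |coefG β j| * |trigG j q| * |Real.exp (β * Vcos q / 2)| := by
        rw [Real.norm_eq_abs, abs_mul, abs_mul]
    _ ≤ (Real.sqrt (Znu β Vcos / (2*π)) + Real.sqrt (Znu β Vcos / π)) * 1 * Real.exp β := by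
        gcongr <;> positivity
    _ = (Real.sqrt (Znu β Vcos / (2*π)) + Real.sqrt (Znu β Vcos / π)) * Real.exp β := by ring

lemma csum_a (β : ℝ) (L : ℕ) (φ : ℝ → ℝ) :
    ∑ j ∈ Finset.range (2*L+3), acoef β φ j * Rc β j (2*L+3)
      = acoef β φ (2*L+2) * (β/4) := by
  rw [Finset.sum_eq_single (2*L+2)]
  · congr 1
    unfold Rc
    rw [if_neg (by omega : ¬(2*L+2 = 0 ∧ 2*L+3 = 1)),
      if_neg (by omega : ¬((2*L+2) % 2 = 1 ∧ 2*L+3 = 2*L+2+1)),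
      if_neg (by omega : ¬((2*L+2) % 2 = 1 ∧ 2*L+3 = 2*L+2+3)),
      if_neg (by omega : ¬(2*L+2 = 1 ∧ 2*L+3 = 0)),
      if_neg (by omega : ¬((2*L+2) % 2 = 1 ∧ 3 ≤ 2*L+2 ∧ 2*L+3 = 2*L+2-1)),
      if_neg (by omega : ¬((2*L+2) % 2 = 0 ∧ 2*L+2 ≠ 0 ∧ 2*L+3 = 2*L+2-1)),
      if_pos (by omega : (2*L+2) % 2 = 0 ∧ 2*L+2 ≠ 0 ∧ 2*L+3 = 2*L+2+1),
      if_neg (by omega : ¬((2*L+2) % 2 = 0 ∧ 4 ≤ 2*L+2 ∧ 2*L+3 = 2*L+2-3))]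
    ring
  · intro b hb hne
    rw [Finset.mem_range] at hb
    have hz : Rc β b (2*L+3) = 0 := by
      unfold Rc
      rw [if_neg (by omega), if_neg (by omega), if_neg (by omega), if_neg (by omega),
        if_neg (by omega), if_neg (by omega), if_neg (by omega), if_neg (by omega)]
      ring
    rw [hz, mul_zero]
  · intro h
    exact absurd (Finset.mem_range.mpr (by omega)) h

lemma csum_b (β : ℝ) (L : ℕ) (φ : ℝ → ℝ) :
    ∑ j ∈ Finset.range (2*L+3), acoef β φ j * Rc β j (2*L+4)
      = acoef β φ (2*L+1) * (-(β/4)) := by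
  rw [Finset.sum_eq_single (2*L+1)]
  · congr 1
    unfold Rc
    rw [if_neg (by omega : ¬(2*L+1 = 0 ∧ 2*L+4 = 1)),
      if_neg (by omega : ¬((2*L+1) % 2 = 1 ∧ 2*L+4 = 2*L+1+1)),
      if_pos (by omega : (2*L+1) % 2 = 1 ∧ 2*L+4 = 2*L+1+3),
      if_neg (by omega : ¬(2*L+1 = 1 ∧ 2*L+4 = 0)),
      if_neg (by omega : ¬((2*L+1) % 2 = 1 ∧ 3 ≤ 2*L+1 ∧ 2*L+4 = 2*L+1-1)),
      if_neg (by omega : ¬((2*L+1) % 2 = 0 ∧ 2*L+1 ≠ 0 ∧ 2*L+4 = 2*L+1-1)),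
      if_neg (by omega : ¬((2*L+1) % 2 = 0 ∧ 2*L+1 ≠ 0 ∧ 2*L+4 = 2*L+1+1)),
      if_neg (by omega : ¬((2*L+1) % 2 = 0 ∧ 4 ≤ 2*L+1 ∧ 2*L+4 = 2*L+1-3))]
    ring
  · intro b hb hne
    rw [Finset.mem_range] at hb
    have hz : Rc β b (2*L+4) = 0 := by
      unfold Rc
      rw [if_neg (by omega), if_neg (by omega), if_neg (by omega), if_neg (by omega),
        if_neg (by omega), if_neg (by omega), if_neg (by omega), if_neg (by omega)]
      ring
    rw [hz, mul_zero]
  · intro h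
    exact absurd (Finset.mem_range.mpr (by omega)) h

lemma csum_c (β : ℝ) (L : ℕ) (φ : ℝ → ℝ) :
    ∑ j ∈ Finset.range (2*L+3), acoef β φ j * Rc β j (2*L+5) = 0 := by
  apply Finset.sum_eq_zero
  intro j hj
  rw [Finset.mem_range] at hj
  have hz : Rc β j (2*L+5) = 0 := by
    unfold Rc
    rw [if_neg (by omega), if_neg (by omega), if_neg (by omega), if_neg (by omega),
      if_neg (by omega), if_neg (by omega), if_neg (by omega), if_neg (by omega)]
    ring
  rw [hz, mul_zero]

lemma csum_d (β : ℝ) (L : ℕ) (φ : ℝ → ℝ) :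
    ∑ j ∈ Finset.range (2*L+3), acoef β φ j * Rc β j (2*L+6) = 0 := by
  apply Finset.sum_eq_zero
  intro j hj
  rw [Finset.mem_range] at hj
  have hz : Rc β j (2*L+6) = 0 := by
    unfold Rc
    rw [if_neg (by omega), if_neg (by omega), if_neg (by omega), if_neg (by omega),
      if_neg (by omega), if_neg (by omega), if_neg (by omega), if_neg (by omega)]
    ring
  rw [hz, mul_zero]

lemma part1 (β : ℝ) (hβ : 0 < β) (L : ℕ) (φ : ℝ → ℝ) (q : ℝ) :
    deriv (projq β Vcos (L+2) φ) q - projq β Vcos (L+2) (deriv (projq β Vcos (L+2) φ)) q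
      = (β/4) * (acoef β φ (2*L+2) * Gfun β Vcos (2*L+3) q
          - acoef β φ (2*L+1) * Gfun β Vcos (2*L+4) q) := by
  have hrange : 2*(L+2) - 1 = 2*L+3 := by omega
  have hc : ∀ i, acoef β (deriv (projq β Vcos (L+2) φ)) i
      = ∑ j ∈ Finset.range (2*L+3), acoef β φ j * Rc β j i := by
    intro i
    have h := integral_D_G β hβ (L+2) φ i
    rw [hrange] at h
    exact h
  have hPD : projq β Vcos (L+2) (deriv (projq β Vcos (L+2) φ)) q
      = ∑ i ∈ Finset.range (2*L+3),
          (∑ j ∈ Finset.range (2*L+3), acoef β φ j * Rc β j i) * Gfun β Vcos i q := by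
    rw [proj_eq, hrange]
    exact Finset.sum_congr rfl fun i _ => by rw [hc i]
  have hD : deriv (projq β Vcos (L+2) φ) q
      = ∑ m ∈ Finset.range (2*L+7),
          (∑ j ∈ Finset.range (2*L+3), acoef β φ j * Rc β j m) * Gfun β Vcos m q := by
    rw [deriv_proj, hrange]
    have hext : ∀ j ∈ Finset.range (2*L+3),
        acoef β φ j * (∑ m ∈ Finset.range (j+4), Rc β j m * Gfun β Vcos m q)
        = ∑ m ∈ Finset.range (2*L+7), acoef β φ j * (Rc β j m * Gfun β Vcos m q) := by
      intro j hj
      rw [Finset.mem_range] at hj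
      rw [Finset.mul_sum]
      apply Finset.sum_subset
      · apply Finset.range_subset_range.mpr; omega
      · intro m _ h4
        rw [Finset.mem_range, not_lt] at h4
        rw [Rc_zero β h4, zero_mul, mul_zero]
    rw [Finset.sum_congr rfl hext, Finset.sum_comm]
    refine Finset.sum_congr rfl fun m _ => ?_
    rw [Finset.sum_mul]
    exact Finset.sum_congr rfl fun j _ => by ring
  rw [hD, hPD]
  rw [show 2*L+7 = (2*L+6)+1 by omega, Finset.sum_range_succ,
    show 2*L+6 = (2*L+5)+1 by omega, Finset.sum_range_succ,
    show 2*L+5 = (2*L+4)+1 by omega, Finset.sum_range_succ,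
    show 2*L+4 = (2*L+3)+1 by omega, Finset.sum_range_succ]
  have e1 := csum_a β L φ
  have e2 := csum_b β L φ
  have e3 := csum_c β L φ
  have e4 := csum_d β L φ
  rw [show (2*L+3)+1 = 2*L+4 by omega, show ((2*L+3)+1)+1 = 2*L+5 by omega,
    show (((2*L+3)+1)+1)+1 = 2*L+6 by omega] at *
  rw [e1, e2, e3, e4]
  ring
lemma acoef_def (β : ℝ) (φ : ℝ → ℝ) (j : ℕ) :
    (∫ q', φ q' * Gfun β Vcos j q' ∂(nuMeas β Vcos)) = acoef β φ j := rfl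

/-- Explicit form and bound of the off-diagonal derivative block: for `V(q) = 1 - cos q`,
`K ≥ 2` and `φ ∈ L²(ν)`,
`(1 - Π_K^q)((Π_K^q φ)') = (β/4)(⟨φ, G_{2K-2}⟩ G_{2K-1} - ⟨φ, G_{2K-3}⟩ G_{2K})`,
and its `L²(ν)` norm is at most `(β/4)‖φ‖_{L²(ν)}`. -/
theorem offdiagonal_derivative_block (β : ℝ) (hβ : 0 < β)
    (K : ℕ) (hK : 2 ≤ K) (φ : ℝ → ℝ)
    (hφ : MeasureTheory.MemLp φ 2 (nuMeas β Vcos)) :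
    (∀ q : ℝ,
      deriv (projq β Vcos K φ) q - projq β Vcos K (deriv (projq β Vcos K φ)) q
        = (β/4) *
          ((∫ q', φ q' * Gfun β Vcos (2*K-2) q' ∂(nuMeas β Vcos)) * Gfun β Vcos (2*K-1) q
            - (∫ q', φ q' * Gfun β Vcos (2*K-3) q' ∂(nuMeas β Vcos)) * Gfun β Vcos (2*K) q)) ∧
    Real.sqrt (∫ q,
        (deriv (projq β Vcos K φ) q - projq β Vcos K (deriv (projq β Vcos K φ)) q)^2
          ∂(nuMeas β Vcos))
      ≤ (β/4) * Real.sqrt (∫ q, (φ q)^2 ∂(nuMeas β Vcos)) := by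
  obtain ⟨L, rfl⟩ : ∃ L, K = L + 2 := ⟨K - 2, by omega⟩
  haveI := nu_finite β hβ
  simp only [show 2*(L+2)-2 = 2*L+2 from by omega, show 2*(L+2)-1 = 2*L+3 from by omega,
    show 2*(L+2)-3 = 2*L+1 from by omega, show 2*(L+2) = 2*L+4 from by omega,
    show 2*L+4-2 = 2*L+2 from by omega, show 2*L+4-1 = 2*L+3 from by omega,
    show 2*L+4-3 = 2*L+1 from by omega]
  simp only [acoef_def]
  constructor
  · exact fun q => part1 β hβ L φ q
  · have hpt : ∀ q,
        (deriv (projq β Vcos (L+2) φ) q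
          - projq β Vcos (L+2) (deriv (projq β Vcos (L+2) φ)) q)^2
        = (β/4)^2 * ((acoef β φ (2*L+2))^2
              * (Gfun β Vcos (2*L+3) q * Gfun β Vcos (2*L+3) q)
            - (2*(acoef β φ (2*L+2))*(acoef β φ (2*L+1)))
              * (Gfun β Vcos (2*L+3) q * Gfun β Vcos (2*L+4) q)
            + (acoef β φ (2*L+1))^2
              * (Gfun β Vcos (2*L+4) q * Gfun β Vcos (2*L+4) q)) := by
      intro q; rw [part1 β hβ L φ q]; ring
    have i1 := (int_GG β (2*L+3) (2*L+3)).const_mul ((acoef β φ (2*L+2))^2)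
    have i2 := (int_GG β (2*L+3) (2*L+4)).const_mul
      (2*(acoef β φ (2*L+2))*(acoef β φ (2*L+1)))
    have i3 := (int_GG β (2*L+4) (2*L+4)).const_mul ((acoef β φ (2*L+1))^2)
    have hne : ¬(2*L+3 = 2*L+4) := by omega
    have i12 : Integrable (fun x => (acoef β φ (2*L+2))^2
          * (Gfun β Vcos (2*L+3) x * Gfun β Vcos (2*L+3) x)
        - (2*(acoef β φ (2*L+2))*(acoef β φ (2*L+1)))
          * (Gfun β Vcos (2*L+3) x * Gfun β Vcos (2*L+4) x)) (nuMeas β Vcos) := i1.sub i2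
    have hI : ∫ q, (deriv (projq β Vcos (L+2) φ) q
          - projq β Vcos (L+2) (deriv (projq β Vcos (L+2) φ)) q)^2 ∂(nuMeas β Vcos)
        = (β/4)^2 * ((acoef β φ (2*L+2))^2 + (acoef β φ (2*L+1))^2) := by
      rw [MeasureTheory.integral_congr_ae (Filter.Eventually.of_forall hpt),
        MeasureTheory.integral_const_mul,
        MeasureTheory.integral_add i12 i3,
        MeasureTheory.integral_sub i1 i2,
        MeasureTheory.integral_const_mul, MeasureTheory.integral_const_mul,
        MeasureTheory.integral_const_mul,
        G_orth β hβ, G_orth β hβ, G_orth β hβ]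
      simp only [hne, eq_self_iff_true, if_true, if_false, ite_true, ite_false]
      ring
    rw [hI]
    have hφint : Integrable φ (nuMeas β Vcos) := hφ.integrable one_le_two
    have hφG : ∀ j, Integrable (fun q => φ q * Gfun β Vcos j q) (nuMeas β Vcos) := by
      intro j
      obtain ⟨C, hC⟩ := G_bdd β hβ j
      have h := hφint.bdd_mul (cont_G β j).aestronglyMeasurable (Filter.Eventually.of_forall hC)
      exact h.congr (Filter.Eventually.of_forall fun x => mul_comm _ _)
    have hbes : (acoef β φ (2*L+2))^2 + (acoef β φ (2*L+1))^2
        ≤ ∫ q, (φ q)^2 ∂(nuMeas β Vcos) := by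
      set A := acoef β φ (2*L+2) with hA
      set B := acoef β φ (2*L+1) with hB
      have h0 : 0 ≤ ∫ q, (φ q - (A * Gfun β Vcos (2*L+2) q
          + B * Gfun β Vcos (2*L+1) q))^2 ∂(nuMeas β Vcos) :=
        integral_nonneg fun q => sq_nonneg _
      have hpt2 : ∀ q, (φ q - (A * Gfun β Vcos (2*L+2) q + B * Gfun β Vcos (2*L+1) q))^2
          = (φ q)^2 - ((2*A)*(φ q * Gfun β Vcos (2*L+2) q)
              + (2*B)*(φ q * Gfun β Vcos (2*L+1) q))
            + ((A^2)*(Gfun β Vcos (2*L+2) q * Gfun β Vcos (2*L+2) q)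
              + (2*A*B)*(Gfun β Vcos (2*L+2) q * Gfun β Vcos (2*L+1) q)
              + (B^2)*(Gfun β Vcos (2*L+1) q * Gfun β Vcos (2*L+1) q)) := fun q => by ring
      have hsq : Integrable (fun q => (φ q)^2) (nuMeas β Vcos) := hφ.integrable_sq
      have ia := (hφG (2*L+2)).const_mul (2*A)
      have ib := (hφG (2*L+1)).const_mul (2*B)
      have j1 := (int_GG β (2*L+2) (2*L+2)).const_mul (A^2)
      have j2 := (int_GG β (2*L+2) (2*L+1)).const_mul (2*A*B)
      have j3 := (int_GG β (2*L+1) (2*L+1)).const_mul (B^2)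
      have hne2 : ¬(2*L+2 = 2*L+1) := by omega
      have iab : Integrable (fun x => (2*A)*(φ x * Gfun β Vcos (2*L+2) x)
          + (2*B)*(φ x * Gfun β Vcos (2*L+1) x)) (nuMeas β Vcos) := ia.add ib
      have hleft : Integrable (fun x => (φ x)^2 - ((2*A)*(φ x * Gfun β Vcos (2*L+2) x)
          + (2*B)*(φ x * Gfun β Vcos (2*L+1) x))) (nuMeas β Vcos) := hsq.sub iab
      have j12 : Integrable (fun x => (A^2)*(Gfun β Vcos (2*L+2) x * Gfun β Vcos (2*L+2) x)
          + (2*A*B)*(Gfun β Vcos (2*L+2) x * Gfun β Vcos (2*L+1) x)) (nuMeas β Vcos) := j1.add j2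
      have jright : Integrable (fun x =>
          ((A^2)*(Gfun β Vcos (2*L+2) x * Gfun β Vcos (2*L+2) x)
          + (2*A*B)*(Gfun β Vcos (2*L+2) x * Gfun β Vcos (2*L+1) x))
          + (B^2)*(Gfun β Vcos (2*L+1) x * Gfun β Vcos (2*L+1) x)) (nuMeas β Vcos) := j12.add j3
      rw [MeasureTheory.integral_congr_ae (Filter.Eventually.of_forall hpt2),
        MeasureTheory.integral_add hleft jright,
        MeasureTheory.integral_sub hsq iab,
        MeasureTheory.integral_add ia ib,
        MeasureTheory.integral_add j12 j3,
        MeasureTheory.integral_add j1 j2,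
        MeasureTheory.integral_const_mul, MeasureTheory.integral_const_mul,
        MeasureTheory.integral_const_mul, MeasureTheory.integral_const_mul,
        MeasureTheory.integral_const_mul,
        G_orth β hβ, G_orth β hβ, G_orth β hβ] at h0
      simp only [hne2, eq_self_iff_true, if_true, if_false, ite_true, ite_false] at h0
      rw [show (∫ q, φ q * Gfun β Vcos (2*L+2) q ∂(nuMeas β Vcos)) = A from rfl,
        show (∫ q, φ q * Gfun β Vcos (2*L+1) q ∂(nuMeas β Vcos)) = B from rfl] at h0
      nlinarith [h0]
    have hs : Real.sqrt ((β/4)^2 * ((acoef β φ (2*L+2))^2 + (acoef β φ (2*L+1))^2))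
        = (β/4) * Real.sqrt ((acoef β φ (2*L+2))^2 + (acoef β φ (2*L+1))^2) := by
      rw [Real.sqrt_mul (sq_nonneg _), Real.sqrt_sq (by positivity)]
    rw [hs]
    exact mul_le_mul_of_nonneg_left (Real.sqrt_le_sqrt hbes) (by positivity)
end
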